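/- arXiv:2107.09699 — 7 statements merged into one kernel-verified Lean document; each statement's English description precedes it below -/
import Mathlib

section
/- A permutation σ of size n avoids the pattern 321 if and only if both of the subsequences of σ indexed by E⁺ = {i ∈ [n] : σ(i) ≥ i} and by E⁻ = {i ∈ [n] : σ(i) < i} are increasing (i.e., for i < j both in E⁺, σ(i) < σ(j), and similarly for E⁻). -/
open Finset

/-- Counting lemma: the set of positions with value `< σ j` has cardinality `σ j`. -/
lemma card_filter_lt_val {n : ℕ} (σ : Equiv.Perm (Fin n)) (c : Fin n) :
    (Finset.univ.filter (fun p => σ p < c)).card = (c : ℕ) := by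
  rw [← Fin.card_Iio (b := c)]
  apply Finset.card_bij (fun p _ => σ p)
  · intro a ha; simp only [mem_filter] at ha; simpa using ha.2
  · intro a ha b hb h; exact σ.injective h
  · intro b hb; exact ⟨σ.symm b, by simpa using (by simpa using hb : b < c), by simp⟩

lemma card_filter_gt_val {n : ℕ} (σ : Equiv.Perm (Fin n)) (c : Fin n) :
    (Finset.univ.filter (fun p => c < σ p)).card = n - 1 - (c : ℕ) := by
  rw [← Fin.card_Ioi (a := c)]
  apply Finset.card_bij (fun p _ => σ p)
  · intro a ha; simp only [mem_filter] at ha; simpa using ha.2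
  · intro a ha b hb h; exact σ.injective h
  · intro b hb; exact ⟨σ.symm b, by simpa using (by simpa using hb : c < b), by simp⟩

/-- If `i < j`, `j ≤ σ j`, and `σ j < σ i`, then some later position has a smaller value. -/
lemma exists_later_smaller {n : ℕ} (σ : Equiv.Perm (Fin n)) (i j : Fin n)
    (hij : i < j) (hjw : (j : ℕ) ≤ (σ j : ℕ)) (hval : σ j < σ i) :
    ∃ l, j < l ∧ σ l < σ j := by
  by_contra h
  push_neg at h
  have hsub : (Finset.univ.filter (fun p => σ p < σ j)) ⊆ (Finset.Iio j).erase i := by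
    intro p hp
    simp only [mem_filter, mem_univ, true_and] at hp
    have hpj : p ≠ j := fun he => absurd hp (by rw [he]; exact lt_irrefl _)
    have hplt : p < j := by
      rcases lt_or_ge p j with h1 | h1
      · exact h1
      · exact absurd (h p (lt_of_le_of_ne h1 (Ne.symm hpj))) (not_le.2 hp)
    have hpi : p ≠ i := fun he => absurd hval (not_lt.2 (le_of_lt (he ▸ hp)))
    exact Finset.mem_erase.2 ⟨hpi, Finset.mem_Iio.2 hplt⟩
  have hcard := Finset.card_le_card hsub
  rw [card_filter_lt_val, Finset.card_erase_of_mem (Finset.mem_Iio.2 hij), Fin.card_Iio] at hcard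
  have hj1 : (i : ℕ) < (j : ℕ) := hij
  omega

/-- If `i < j`, `σ i < i`, and `σ j < σ i`, then some earlier position has a larger value. -/
lemma exists_earlier_larger {n : ℕ} (σ : Equiv.Perm (Fin n)) (i j : Fin n)
    (hij : i < j) (hiw : (σ i : ℕ) < (i : ℕ)) (hval : σ j < σ i) :
    ∃ l, l < i ∧ σ i < σ l := by
  by_contra h
  push_neg at h
  have hsub : (Finset.univ.filter (fun p => σ i < σ p)) ⊆ (Finset.Ioi i).erase j := by
    intro p hp
    simp only [mem_filter, mem_univ, true_and] at hp
    have hpi : p ≠ i := fun he => absurd hp (by rw [he]; exact lt_irrefl _)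
    have hplt : i < p := by
      rcases lt_or_ge i p with h1 | h1
      · exact h1
      · exact absurd (h p (lt_of_le_of_ne h1 hpi)) (not_le.2 hp)
    have hpj : p ≠ j := fun he => absurd hval (not_lt.2 (le_of_lt (he ▸ hp)))
    exact Finset.mem_erase.2 ⟨hpj, Finset.mem_Ioi.2 hplt⟩
  have hcard := Finset.card_le_card hsub
  rw [card_filter_gt_val, Finset.card_erase_of_mem (Finset.mem_Ioi.2 hij), Fin.card_Ioi] at hcard
  have hjn : (j : ℕ) < n := j.isLt
  have hin : (i : ℕ) < (j : ℕ) := hij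
  omega

/-- `σ` avoids the pattern 321: there are no indices `i < j < l` with `σ i > σ j > σ l`. -/
def avoids321 {n : ℕ} (σ : Equiv.Perm (Fin n)) : Prop :=
  ∀ i j l : Fin n, i < j → j < l → ¬(σ l < σ j ∧ σ j < σ i)

/-- A permutation `σ` of size `n` avoids 321 if and only if the subsequences of `σ` indexed by
`E⁺ = {i : σ i ≥ i}` (weak exceedances) and by `E⁻ = {i : σ i < i}` are both increasing. -/
theorem avoids321_iff_two_increasing (n : ℕ) (σ : Equiv.Perm (Fin n)) :
    avoids321 σ ↔
      ((∀ i j : Fin n, i < j → (i : ℕ) ≤ (σ i : ℕ) → (j : ℕ) ≤ (σ j : ℕ) → σ i < σ j) ∧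
       (∀ i j : Fin n, i < j → (σ i : ℕ) < (i : ℕ) → (σ j : ℕ) < (j : ℕ) → σ i < σ j)) := by
  constructor
  · intro hav
    constructor
    · intro i j hij hi hj
      by_contra hle
      have hne : σ i ≠ σ j := fun he => absurd (σ.injective he) (ne_of_lt hij)
      have hval : σ j < σ i := lt_of_le_of_ne (not_lt.1 hle) (Ne.symm hne)
      obtain ⟨l, hjl, hl⟩ := exists_later_smaller σ i j hij hj hval
      exact hav i j l hij hjl ⟨hl, hval⟩
    · intro i j hij hi hj
      by_contra hle
      have hne : σ i ≠ σ j := fun he => absurd (σ.injective he) (ne_of_lt hij)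
      have hval : σ j < σ i := lt_of_le_of_ne (not_lt.1 hle) (Ne.symm hne)
      obtain ⟨l, hli, hl⟩ := exists_earlier_larger σ i j hij hi hval
      exact hav l i j hli hij ⟨hval, hl⟩
  · rintro ⟨hE, hD⟩ i j l hij hjl ⟨h1, h2⟩
    rcases le_or_gt (j : ℕ) (σ j : ℕ) with hj | hj
    · -- j is a weak exceedance
      have hi : (σ i : ℕ) < (i : ℕ) := by
        by_contra h; exact absurd (hE i j hij (not_lt.1 h) hj) (not_lt.2 (le_of_lt h2))
      have hl : (σ l : ℕ) < (l : ℕ) := by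
        by_contra h; exact absurd (hE j l hjl hj (not_lt.1 h)) (not_lt.2 (le_of_lt h1))
      exact absurd (hD i l (lt_trans hij hjl) hi hl) (not_lt.2 (le_of_lt (lt_trans h1 h2)))
    · -- j is a deficiency
      have hi : (i : ℕ) ≤ (σ i : ℕ) := by
        by_contra h; exact absurd (hD i j hij (not_le.1 h) hj) (not_lt.2 (le_of_lt h2))
      have hl : (l : ℕ) ≤ (σ l : ℕ) := by
        by_contra h; exact absurd (hD j l hjl hj (not_le.1 h)) (not_lt.2 (le_of_lt h1))
      exact absurd (hE i l (lt_trans hij hjl) hi hl) (not_lt.2 (le_of_lt (lt_trans h1 h2)))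
end

section
/- Let σ be a permutation of size n ≥ 1 and let ℓ = σ⁻¹(n) be the position of its maximum. Then σ avoids the pattern 231 if and only if: (1) the pattern of σ restricted to positions {1,...,ℓ−1} avoids 231, (2) the pattern of σ restricted to positions {ℓ+1,...,n} avoids 231, and (3) σ(i) < σ(j) whenever i < ℓ and j > ℓ. -/
/-- `σ` avoids the pattern 231: there are no indices `i < j < l` with `σ l < σ i < σ j`. -/
def avoids231 {n : ℕ} (σ : Equiv.Perm (Fin n)) : Prop :=
  ∀ i j l : Fin n, i < j → j < l → ¬(σ l < σ i ∧ σ i < σ j)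

/-- The pattern of `σ` on the set of positions `S` avoids 231, i.e. there is no occurrence of
231 with all three indices in `S`.  (Since pattern containment only depends on relative order,
this says exactly that `pat_S(σ)` avoids 231.) -/
def avoids231On {n : ℕ} (σ : Equiv.Perm (Fin n)) (S : Set (Fin n)) : Prop :=
  ∀ i j l : Fin n, i ∈ S → j ∈ S → l ∈ S → i < j → j < l → ¬(σ l < σ i ∧ σ i < σ j)

/-- Let `σ` have size `n ≥ 1` and let `ℓ = σ⁻¹(max)` be the position of its maximum value.
Then `σ` avoids 231 iff the patterns of `σ` strictly before `ℓ` and strictly after `ℓ` avoid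
231, and `σ i < σ j` whenever `i < ℓ < j`. -/
theorem avoids231_iff_decomposition (n : ℕ) (hn : 1 ≤ n) (σ : Equiv.Perm (Fin n)) :
    avoids231 σ ↔
      (avoids231On σ {i | i < σ.symm ⟨n - 1, by omega⟩} ∧
       avoids231On σ {i | σ.symm ⟨n - 1, by omega⟩ < i} ∧
       ∀ i j : Fin n, i < σ.symm ⟨n - 1, by omega⟩ → σ.symm ⟨n - 1, by omega⟩ < j →
         σ i < σ j) := by
  set t : Fin n := ⟨n - 1, by omega⟩ with ht
  set L : Fin n := σ.symm t with hL
  have hσL : σ L = t := σ.apply_symm_apply t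
  have htop : ∀ k : Fin n, σ k ≤ t := fun k => by
    rw [ht, Fin.le_def]; exact Nat.le_pred_of_lt (σ k).isLt
  have hlt : ∀ k : Fin n, k ≠ L → σ k < t := fun k hk => by
    rcases lt_or_eq_of_le (htop k) with h | h
    · exact h
    · exact absurd (σ.injective (h.trans hσL.symm)) hk
  constructor
  · intro h
    refine ⟨fun i j l _ _ _ hij hjl => h i j l hij hjl,
            fun i j l _ _ _ hij hjl => h i j l hij hjl, ?_⟩
    intro i j hi hj
    by_contra hc
    push_neg at hc
    have hne : σ j ≠ σ i := fun e => by
      have := σ.injective e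
      exact absurd (this ▸ hj) (lt_asymm (this ▸ hi))
    have hji : σ j < σ i := lt_of_le_of_ne hc hne
    exact h i L j hi hj ⟨hji, hσL ▸ hlt i (ne_of_lt hi)⟩
  · rintro ⟨h1, h2, h3⟩ i j l hij hjl ⟨hli, hij'⟩
    have hiL : i ≠ L := by
      rintro rfl
      exact absurd hij' (not_lt_of_ge (hσL ▸ htop j))
    have hlL : l ≠ L := by
      rintro rfl
      rw [hσL] at hli
      exact absurd hli (not_lt_of_ge (htop i))
    rcases lt_or_gt_of_ne hiL with hi | hi
    · rcases lt_or_gt_of_ne hlL with hl | hl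
      · exact h1 i j l hi (lt_trans hjl hl) hl hij hjl ⟨hli, hij'⟩
      · exact absurd (h3 i l hi hl) (not_lt_of_gt hli)
    · exact h2 i j l hi (lt_trans hi hij) (lt_trans hi (lt_trans hij hjl)) hij hjl ⟨hli, hij'⟩
end

section
/- Let π be a 231-avoiding permutation of size k with m = π⁻¹(k), and let σ be a 231-avoiding permutation of size n with ℓ = σ⁻¹(n). Then the number of consecutive occurrences of π in σ satisfies: cocc(π, σ) = cocc(π, pat_{[1,ℓ−1]}(σ)) + cocc(π, pat_{[ℓ+1,n]}(σ)) + [pat_{[ℓ−m+1, ℓ+k−m]}(σ) = π], where the last term is the indicator that ℓ−m+1 ≥ 1, ℓ+k−m ≤ n, and the pattern of σ on the interval [ℓ−m+1, ℓ+k−m] equals π. -/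
open scoped Classical

/-- The number of consecutive occurrences of the pattern `π` (of size `k`) in the finite
sequence `f` of distinct values in a linear order: the number of intervals of `k` consecutive
positions on which `f` is in the same relative order as `π`.  Since consecutive occurrences
only depend on relative order, for `f` the subsequence of a permutation `σ` on an interval `I`
this is exactly `cocc(π, pat_I(σ))`. -/
noncomputable def coccSeq {α : Type*} [LinearOrder α] {k : ℕ} (π : Equiv.Perm (Fin k))
    {m : ℕ} (f : Fin m → α) : ℕ :=
  ((Finset.range (m + 1)).filter (fun a =>
    ∃ h : a + k ≤ m, ∀ s t : Fin k,
      (f ⟨a + s.1, by have := s.isLt; omega⟩ < f ⟨a + t.1, by have := t.isLt; omega⟩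
        ↔ π s < π t))).card

/-!
Every window of `k` consecutive positions of `σ` lies strictly left of the position `l0` of the
maximum `n - 1`, strictly right of it, or contains it. Windows of the first two kinds are exactly
the occurrences in the two blocks. In a window of the third kind the maximum of `σ` must play
the role of the maximum of `π`, so the window starts at `l0 - m0`, and it is an occurrence
precisely when the indicator condition holds.
-/

open Finset

theorem Finset.card_eq_card_filter_left_add_card_filter_right_add_card_filter_around
    (s : Finset ℕ) (l k : ℕ) :
    #s = #(s.filter (· + k ≤ l)) + #(s.filter (l < ·))
      + #(s.filter fun a => a ≤ l ∧ l < a + k) := by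
  rw [← card_filter_add_card_filter_not (s := s) (· + k ≤ l), add_assoc,
    ← card_filter_add_card_filter_not (s := s.filter fun a => ¬a + k ≤ l) (l < ·),
    filter_filter, filter_filter]
  congr 3 <;> exact filter_congr fun a _ => by omega

section Occurrences

variable {α : Type*} [LinearOrder α] {k : ℕ} (π : Equiv.Perm (Fin k))

noncomputable def occurrences {m : ℕ} (f : Fin m → α) : Finset ℕ :=
  (range (m + 1)).filter (fun a =>
    ∃ h : a + k ≤ m, ∀ s t : Fin k,
      (f ⟨a + s.1, by have := s.isLt; omega⟩ < f ⟨a + t.1, by have := t.isLt; omega⟩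
        ↔ π s < π t))

theorem coccSeq_eq_card_occurrences {m : ℕ} (f : Fin m → α) :
    coccSeq π f = #(occurrences π f) := rfl

theorem mem_occurrences {m : ℕ} {f : Fin m → α} {a : ℕ} :
    a ∈ occurrences π f ↔ a + k ≤ m ∧ ∀ (s t : Fin k) (hs : a + s < m) (ht : a + t < m),
      (f ⟨a + s, hs⟩ < f ⟨a + t, ht⟩ ↔ π s < π t) := by
  simp only [occurrences, mem_filter, mem_range]
  exact ⟨fun ⟨_, h, hst⟩ => ⟨h, fun s t _ _ => hst s t⟩,
    fun ⟨h, hst⟩ => ⟨by omega, h, fun s t => hst s t _ _⟩⟩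

variable {n : ℕ} (f : Fin n → α)

theorem occurrences_prefix_eq_filter {p : ℕ} (hp : p ≤ n) :
    occurrences π (fun s : Fin p => f ⟨s, s.isLt.trans_le hp⟩)
      = (occurrences π f).filter (· + k ≤ p) := by
  ext a
  simp only [mem_filter, mem_occurrences]
  exact ⟨fun ⟨h, hst⟩ => ⟨⟨by omega, fun s t _ _ => hst s t (by omega) (by omega)⟩, h⟩,
    fun ⟨⟨_, hst⟩, h⟩ => ⟨h, fun s t _ _ => hst s t _ _⟩⟩

theorem filter_le_occurrences_eq_map {q : ℕ} (hq : q ≤ n) :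
    (occurrences π f).filter (q ≤ ·)
      = (occurrences π (fun s : Fin (n - q) => f ⟨q + s, by omega⟩)).map
          (addLeftEmbedding q) := by
  ext b
  simp only [mem_filter, mem_map, addLeftEmbedding_apply, mem_occurrences]
  constructor
  · rintro ⟨⟨h, hst⟩, hqb⟩
    refine ⟨b - q, ⟨by omega, fun s t _ _ => ?_⟩, by omega⟩
    simp only [← Nat.add_assoc, Nat.add_sub_cancel' hqb]
    exact hst s t _ _
  · rintro ⟨a, ⟨h, hst⟩, rfl⟩
    refine ⟨⟨by omega, fun s t _ _ => ?_⟩, by omega⟩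
    simp only [Nat.add_assoc]
    exact hst s t (by omega) (by omega)

theorem coccSeq_suffix_eq_card_filter {q : ℕ} (hq : q ≤ n) :
    coccSeq π (fun s : Fin (n - q) => f ⟨q + s, by omega⟩)
      = #((occurrences π f).filter (q ≤ ·)) := by
  rw [filter_le_occurrences_eq_map π f hq, card_map, coccSeq_eq_card_occurrences]

theorem add_eq_of_mem_occurrences_of_le_max {l : Fin n} (hf : ∀ i, f i ≤ f l) {m₀ : Fin k}
    (hπ : ∀ t, π t ≤ π m₀) {a : ℕ} (ha : a ∈ occurrences π f) (hal : a ≤ l)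
    (hla : l < a + k) : a + m₀ = l := by
  obtain ⟨hak, hst⟩ := (mem_occurrences π).1 ha
  by_contra hne
  have hlt : π ⟨l - a, by omega⟩ < π m₀ :=
    (hπ _).lt_of_ne fun h => hne (by have := Fin.val_eq_of_eq (π.injective h); simp only at this; omega)
  have := (hst _ _ (by omega) (by omega)).2 hlt
  simp only [Nat.add_sub_cancel' hal] at this
  exact (hf _).not_gt this

theorem card_filter_occurrences_around_max {l : Fin n} (hf : ∀ i, f i ≤ f l) {m₀ : Fin k}
    (hπ : ∀ t, π t ≤ π m₀) :
    #((occurrences π f).filter fun a => a ≤ (l : ℕ) ∧ l < a + k)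
      = if (m₀ : ℕ) ≤ l ∧ (l : ℕ) - m₀ ∈ occurrences π f then 1 else 0 := by
  have hm₀ := m₀.isLt
  split_ifs with h
  · refine card_eq_one.2 ⟨(l : ℕ) - m₀, ext fun a => ?_⟩
    simp only [mem_filter, mem_singleton]
    constructor
    · rintro ⟨ha, hal, hla⟩
      have := add_eq_of_mem_occurrences_of_le_max π f hf hπ ha hal hla
      omega
    · rintro rfl
      exact ⟨h.2, by omega, by omega⟩
  · refine card_eq_zero.2 (filter_eq_empty_iff.2 fun a ha ⟨hal, hla⟩ => h ?_)
    have := add_eq_of_mem_occurrences_of_le_max π f hf hπ ha hal hla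
    exact ⟨by omega, by rwa [show (l : ℕ) - m₀ = a by omega]⟩

end Occurrences

/-- The recursion for consecutive occurrences of a 231-avoiding pattern `π` in a 231-avoiding
permutation `σ` (0-indexed): if `m0` is the position of the maximum of `π` and `l0` the
position of the maximum of `σ`, then `cocc(π,σ)` is the sum of the numbers of consecutive
occurrences in the part before the maximum and in the part after the maximum, plus the
indicator that the interval of length `k` whose `m0`-th entry is the maximum of `σ` fits
inside `[0,n)` and induces exactly the pattern `π`. -/
theorem cocc_recursion (k n : ℕ) (π : Equiv.Perm (Fin k)) (σ : Equiv.Perm (Fin n))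
    (m0 l0 : ℕ) (hm0k : m0 < k) (hl0n : l0 < n)
    (hm0 : (π ⟨m0, hm0k⟩ : ℕ) = k - 1) (hl0 : (σ ⟨l0, hl0n⟩ : ℕ) = n - 1) :
    coccSeq π (fun i : Fin n => σ i)
      = coccSeq π (fun s : Fin l0 => σ ⟨s.1, Nat.lt_trans s.isLt hl0n⟩)
        + coccSeq π (fun s : Fin (n - (l0 + 1)) => σ ⟨l0 + 1 + s.1, by
            have := s.isLt; omega⟩)
        + (if ∃ _ : m0 ≤ l0, ∃ h : l0 - m0 + k ≤ n, ∀ s t : Fin k,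
              (σ ⟨l0 - m0 + s.1, by have := s.isLt; omega⟩
                < σ ⟨l0 - m0 + t.1, by have := t.isLt; omega⟩ ↔ π s < π t)
           then 1 else 0) := by
  have hπ : ∀ t, π t ≤ π ⟨m0, hm0k⟩ := fun t =>
    Fin.le_def.2 (hm0 ▸ Nat.le_sub_one_of_lt (π t).isLt)
  have hσ : ∀ i, σ i ≤ σ ⟨l0, hl0n⟩ := fun i =>
    Fin.le_def.2 (hl0 ▸ Nat.le_sub_one_of_lt (σ i).isLt)
  rw [coccSeq_eq_card_occurrences,
    card_eq_card_filter_left_add_card_filter_right_add_card_filter_around _ l0 k,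
    coccSeq_eq_card_occurrences, occurrences_prefix_eq_filter _ _ hl0n.le,
    coccSeq_suffix_eq_card_filter _ _ hl0n,
    card_filter_occurrences_around_max π _ hσ hπ]
  congr 1
  refine if_congr ?_ rfl rfl
  rw [mem_occurrences]
  exact ⟨fun ⟨hm, hk, hst⟩ => ⟨hm, hk, fun s t => hst s t _ _⟩,
    fun ⟨hm, hk, hst⟩ => ⟨hm, hk, fun s t _ _ => hst s t⟩⟩
end

section
/- Let (A_h, ≼_h)_{h ∈ ℤ_{>0}} be a consistent family of finite rooted permutations, meaning each A_h is a finite integer interval containing 0 contained in [−h,h], ≼_h is a total order on A_h, and r_h(A_{h+1}, ≼_{h+1}) = (A_h, ≼_h) for all h. Then there exists a unique (possibly infinite) rooted permutation (A, ≼) — an integer interval A containing 0 with a total order ≼ — such that r_h(A, ≼) = (A_h, ≼_h) for all h ∈ ℤ_{>0}. -/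
open scoped Classical

/-- A (finite or infinite) rooted permutation: a pair `(A, ≼)` where `A` is an integer
interval containing `0` and `≼` is a total order on `A`.  The order is encoded as a relation
on `ℤ` whose related elements all belong to `A`. -/
structure RootedPerm where
  /-- membership in the interval `A` -/
  mem : ℤ → Prop
  /-- the total order `≼` on `A` -/
  rel : ℤ → ℤ → Prop
  zero_mem : mem 0
  mem_of_between : ∀ a b c : ℤ, mem a → mem c → a ≤ b → b ≤ c → mem b
  mem_left_of_rel : ∀ x y, rel x y → mem x
  mem_right_of_rel : ∀ x y, rel x y → mem y
  refl_of_mem : ∀ x, mem x → rel x x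
  antisymm' : ∀ x y, rel x y → rel y x → x = y
  trans' : ∀ x y z, rel x y → rel y z → rel x z
  total' : ∀ x y, mem x → mem y → rel x y ∨ rel y x

/-- The restriction `r_h(A, ≼) = (A ∩ [-h, h], ≼ restricted to A ∩ [-h, h])`. -/
def RootedPerm.restrict (P : RootedPerm) (h : ℕ) : RootedPerm where
  mem x := P.mem x ∧ -(h : ℤ) ≤ x ∧ x ≤ (h : ℤ)
  rel x y := P.rel x y ∧ (-(h : ℤ) ≤ x ∧ x ≤ (h : ℤ)) ∧ (-(h : ℤ) ≤ y ∧ y ≤ (h : ℤ))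
  zero_mem := ⟨P.zero_mem, by omega, by omega⟩
  mem_of_between a b c ha hc hab hbc :=
    ⟨P.mem_of_between a b c ha.1 hc.1 hab hbc, le_trans ha.2.1 hab, le_trans hbc hc.2.2⟩
  mem_left_of_rel x y hxy := ⟨P.mem_left_of_rel x y hxy.1, hxy.2.1⟩
  mem_right_of_rel x y hxy := ⟨P.mem_right_of_rel x y hxy.1, hxy.2.2⟩
  refl_of_mem x hx := ⟨P.refl_of_mem x hx.1, hx.2, hx.2⟩
  antisymm' x y hxy hyx := P.antisymm' x y hxy.1 hyx.1
  trans' x y z hxy hyz := ⟨P.trans' x y z hxy.1 hyz.1, hxy.2.1, hyz.2.2⟩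
  total' x y hx hy :=
    (P.total' x y hx.1 hy.1).imp (fun hr => ⟨hr, hx.2, hy.2⟩) (fun hr => ⟨hr, hy.2, hx.2⟩)

/-- The local (ultrametric) distance
`d((A₁,≼₁),(A₂,≼₂)) = 2^(−sup{h ≥ 1 : r_h(A₁,≼₁) = r_h(A₂,≼₂)})`, with the conventions
`sup ∅ = 0`, `sup ℤ_{>0} = +∞` and `2^{−∞} = 0`. -/
noncomputable def rootedDist (P Q : RootedPerm) : ℝ :=
  if ∀ h : ℕ, 0 < h → P.restrict h = Q.restrict h then 0
  else (2 : ℝ) ^ (-((sSup {h : ℕ | 0 < h ∧ P.restrict h = Q.restrict h} : ℕ) : ℤ))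

lemma RootedPerm.ext' {P Q : RootedPerm} (hm : P.mem = Q.mem) (hr : P.rel = Q.rel) :
    P = Q := by
  cases P; cases Q; simp_all

lemma RootedPerm.restrict_restrict (P : RootedPerm) {h k : ℕ} (hk : h ≤ k) :
    (P.restrict k).restrict h = P.restrict h := by
  apply RootedPerm.ext'
  · funext x
    apply propext
    simp only [RootedPerm.restrict]
    constructor
    · rintro ⟨⟨hm, -⟩, hb⟩; exact ⟨hm, hb⟩
    · rintro ⟨hm, hb⟩; exact ⟨⟨hm, by omega, by omega⟩, hb⟩
  · funext x y
    apply propext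
    simp only [RootedPerm.restrict]
    constructor
    · rintro ⟨⟨hm, -⟩, hb⟩; exact ⟨hm, hb⟩
    · rintro ⟨hm, hbx, hby⟩; exact ⟨⟨hm, ⟨by omega, by omega⟩, ⟨by omega, by omega⟩⟩, hbx, hby⟩

/-- Given a consistent family `(A_h, ≼_h)_{h ≥ 1}` of finite rooted permutations — each `A_h`
being a (finite) integer interval containing `0` contained in `[-h, h]`, with
`r_h(A_{h+1}, ≼_{h+1}) = (A_h, ≼_h)` for all `h ≥ 1` — there exists a unique (possibly
infinite) rooted permutation `(A, ≼)` such that `r_h(A, ≼) = (A_h, ≼_h)` for all `h ≥ 1`. -/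
theorem existsUnique_of_consistent (F : ℕ → RootedPerm)
    (hbound : ∀ h : ℕ, 0 < h → ∀ x : ℤ, (F h).mem x → -(h : ℤ) ≤ x ∧ x ≤ (h : ℤ))
    (hcons : ∀ h : ℕ, 0 < h → (F (h + 1)).restrict h = F h) :
    ∃! P : RootedPerm, ∀ h : ℕ, 0 < h → P.restrict h = F h := by
  -- self-restriction
  have hself : ∀ h : ℕ, 0 < h → (F h).restrict h = F h := by
    intro h hh
    apply RootedPerm.ext'
    · funext x
      apply propext
      simp only [RootedPerm.restrict]
      exact ⟨fun ⟨hm, _⟩ => hm, fun hm => ⟨hm, hbound h hh x hm⟩⟩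
    · funext x y
      apply propext
      simp only [RootedPerm.restrict]
      refine ⟨fun ⟨hm, _⟩ => hm, fun hm => ⟨hm, ?_, ?_⟩⟩
      · exact hbound h hh x ((F h).mem_left_of_rel x y hm)
      · exact hbound h hh y ((F h).mem_right_of_rel x y hm)
  -- monotone consistency
  have hmono : ∀ h k : ℕ, 0 < h → h ≤ k → (F k).restrict h = F h := by
    intro h k hh hk
    induction k, hk using Nat.le_induction with
    | base => exact hself h hh
    | succ k hk ih =>
      have : (F (k + 1)).restrict k = F k := hcons k (by omega)
      rw [← ih, ← this, RootedPerm.restrict_restrict _ hk]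
  have memmono : ∀ h k : ℕ, 0 < h → h ≤ k → ∀ x, (F h).mem x → (F k).mem x := by
    intro h k hh hk x hx
    rw [← hmono h k hh hk] at hx
    exact hx.1
  have relmono : ∀ h k : ℕ, 0 < h → h ≤ k → ∀ x y, (F h).rel x y → (F k).rel x y := by
    intro h k hh hk x y hx
    rw [← hmono h k hh hk] at hx
    exact hx.1
  -- the limit object
  refine ⟨{ mem := fun x => ∃ h : ℕ, 0 < h ∧ (F h).mem x
            rel := fun x y => ∃ h : ℕ, 0 < h ∧ (F h).rel x y
            zero_mem := ⟨1, one_pos, (F 1).zero_mem⟩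
            mem_of_between := ?_
            mem_left_of_rel := ?_
            mem_right_of_rel := ?_
            refl_of_mem := ?_
            antisymm' := ?_
            trans' := ?_
            total' := ?_ }, ?_, ?_⟩
  · rintro a b c ⟨h1, hh1, ha⟩ ⟨h2, hh2, hc⟩ hab hbc
    refine ⟨max h1 h2, by omega, (F (max h1 h2)).mem_of_between a b c ?_ ?_ hab hbc⟩
    · exact memmono h1 _ hh1 (le_max_left _ _) a ha
    · exact memmono h2 _ hh2 (le_max_right _ _) c hc
  · rintro x y ⟨h, hh, hr⟩; exact ⟨h, hh, (F h).mem_left_of_rel x y hr⟩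
  · rintro x y ⟨h, hh, hr⟩; exact ⟨h, hh, (F h).mem_right_of_rel x y hr⟩
  · rintro x ⟨h, hh, hm⟩; exact ⟨h, hh, (F h).refl_of_mem x hm⟩
  · rintro x y ⟨h1, hh1, r1⟩ ⟨h2, hh2, r2⟩
    exact (F (max h1 h2)).antisymm' x y
      (relmono h1 _ hh1 (le_max_left _ _) _ _ r1)
      (relmono h2 _ hh2 (le_max_right _ _) _ _ r2)
  · rintro x y z ⟨h1, hh1, r1⟩ ⟨h2, hh2, r2⟩
    refine ⟨max h1 h2, by omega, (F (max h1 h2)).trans' x y z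
      (relmono h1 _ hh1 (le_max_left _ _) _ _ r1)
      (relmono h2 _ hh2 (le_max_right _ _) _ _ r2)⟩
  · rintro x y ⟨h1, hh1, m1⟩ ⟨h2, hh2, m2⟩
    rcases (F (max h1 h2)).total' x y
      (memmono h1 _ hh1 (le_max_left _ _) _ m1)
      (memmono h2 _ hh2 (le_max_right _ _) _ m2) with hr | hr
    · exact Or.inl ⟨max h1 h2, by omega, hr⟩
    · exact Or.inr ⟨max h1 h2, by omega, hr⟩
  -- the limit restricts correctly
  · intro h hh
    apply RootedPerm.ext'
    · funext x
      apply propext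
      simp only [RootedPerm.restrict]
      constructor
      · rintro ⟨⟨k, hk, hm⟩, hb⟩
        rcases le_or_gt k h with hkh | hkh
        · exact memmono k h hk hkh x hm
        · have := hmono h k hh hkh.le
          rw [← this]
          exact ⟨hm, hb⟩
      · intro hm
        exact ⟨⟨h, hh, hm⟩, hbound h hh x hm⟩
    · funext x y
      apply propext
      simp only [RootedPerm.restrict]
      constructor
      · rintro ⟨⟨k, hk, hr⟩, hbx, hby⟩
        rcases le_or_gt k h with hkh | hkh
        · exact relmono k h hk hkh x y hr
        · have := hmono h k hh hkh.le
          rw [← this]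
          exact ⟨hr, hbx, hby⟩
      · intro hr
        exact ⟨⟨h, hh, hr⟩,
          hbound h hh x ((F h).mem_left_of_rel x y hr),
          hbound h hh y ((F h).mem_right_of_rel x y hr)⟩
  -- uniqueness
  · intro Q hQ
    apply RootedPerm.ext'
    · funext x
      apply propext
      constructor
      · intro hx
        obtain ⟨h, hh, hb1, hb2⟩ : ∃ h : ℕ, 0 < h ∧ -(h : ℤ) ≤ x ∧ x ≤ (h : ℤ) :=
          ⟨x.natAbs + 1, by omega, by omega, by omega⟩
        have hq : (Q.restrict h).mem x := ⟨hx, hb1, hb2⟩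
        rw [hQ h hh] at hq
        exact ⟨h, hh, hq⟩
      · rintro ⟨h, hh, hm⟩
        rw [← hQ h hh] at hm
        exact hm.1
    · funext x y
      apply propext
      constructor
      · intro hx
        obtain ⟨h, hh, hbx1, hbx2, hby1, hby2⟩ :
            ∃ h : ℕ, 0 < h ∧ -(h : ℤ) ≤ x ∧ x ≤ (h : ℤ) ∧ -(h : ℤ) ≤ y ∧ y ≤ (h : ℤ) :=
          ⟨x.natAbs + y.natAbs + 1, by omega, by omega, by omega, by omega, by omega⟩
        have hq : (Q.restrict h).rel x y := ⟨hx, ⟨hbx1, hbx2⟩, ⟨hby1, hby2⟩⟩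
        rw [hQ h hh] at hq
        exact ⟨h, hh, hq⟩
      · rintro ⟨h, hh, hr⟩
        rw [← hQ h hh] at hr
        exact hr.1
end

section
/- Let σ be a permutation of size n and let σ′ be a permutation of size n+1 obtained from σ by inserting one point into its diagram (i.e., there is an index j ∈ [n+1] such that deleting the entry σ′(j) from σ′ and standardizing the remaining sequence yields σ). Then d_□(μ_σ, μ_{σ′}) ≤ 6/n, where d_□(μ, μ′) = sup over axis-parallel open rectangles R ⊆ [0,1]² of |μ(R) − μ′(R)|. -/
open MeasureTheory

/-- The permuton measure `μ_σ` of a (0-indexed) permutation `σ` of size `n`. -/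
noncomputable def permutonMeasure (n : ℕ) (σ : Equiv.Perm (Fin n)) : Measure (ℝ × ℝ) :=
  n • ∑ i : Fin n,
    volume.restrict
      (Set.Icc (((i : ℕ) : ℝ) / n) ((((i : ℕ) : ℝ) + 1) / n) ×ˢ
       Set.Icc ((((σ i : Fin n) : ℕ) : ℝ) / n) (((((σ i : Fin n) : ℕ) : ℝ) + 1) / n))

/-- The rectangular distance `d_□(μ, ν)`: the supremum over axis-parallel open rectangles
`(a,b) × (c,d) ⊆ [0,1]²` of `|μ(R) − ν(R)|`. -/
noncomputable def rectDist (μ ν : Measure (ℝ × ℝ)) : ℝ :=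
  sSup {x : ℝ | ∃ a b c d : ℝ, 0 ≤ a ∧ b ≤ 1 ∧ 0 ≤ c ∧ d ≤ 1 ∧
    x = |(μ (Set.Ioo a b ×ˢ Set.Ioo c d)).toReal - (ν (Set.Ioo a b ×ˢ Set.Ioo c d)).toReal|}

namespace RectDistAux

open Finset ENNReal

/-- The basic clamp function `t ↦ min (max t 0) 1`. -/
noncomputable def c01 (x : ℝ) : ℝ := max 0 (min x 1)

/-- Insertion reindexing: position of old index `i` after inserting a new point at position
`k`. -/
def ins (k i : ℕ) : ℕ := if i < k then i else i + 1

lemma c01_nonneg (x : ℝ) : 0 ≤ c01 x := le_max_left _ _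

lemma c01_le_one (x : ℝ) : c01 x ≤ 1 := max_le zero_le_one (min_le_right _ _)

lemma c01_mono {x y : ℝ} (h : x ≤ y) : c01 x ≤ c01 y :=
  max_le_max le_rfl (min_le_min h le_rfl)

lemma seg_eq (u v i : ℝ) (h : u ≤ v) :
    max 0 (min v (i + 1) - max u i) = c01 (v - i) - c01 (u - i) := by
  simp only [c01, min_def, max_def]
  split_ifs <;> linarith

lemma sum_c01 (u : ℝ) (hu : 0 ≤ u) (m : ℕ) :
    ∑ i ∈ Finset.range m, c01 (u - i) = min u m := by
  induction m with
  | zero => simp [min_eq_right hu]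
  | succ m ih =>
    rw [Finset.sum_range_succ, ih]
    push_cast
    rcases le_total u (m : ℝ) with h | h <;> rcases le_total u ((m : ℝ) + 1) with h2 | h2 <;>
      simp only [c01, min_def, max_def] <;> split_ifs <;> linarith

/-- Sum over `i < k` of `c01((n+1)t - i) - c01(nt - i)` is at most 1. -/
lemma sumD (n k : ℕ) (t : ℝ) (ht : 0 ≤ t) (ht1 : t ≤ 1) :
    ∑ i ∈ Finset.range k, (c01 (((n : ℝ) + 1) * t - i) - c01 ((n : ℝ) * t - i)) ≤ 1 := by
  have h0 : 0 ≤ (n : ℝ) * t := by positivity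
  have h1 : 0 ≤ ((n : ℝ) + 1) * t := by positivity
  rw [Finset.sum_sub_distrib, sum_c01 _ h1, sum_c01 _ h0]
  have : ((n : ℝ) + 1) * t = (n : ℝ) * t + t := by ring
  rcases le_total ((n : ℝ) * t) (k : ℝ) with h | h <;>
    rcases le_total (((n : ℝ) + 1) * t) (k : ℝ) with h2 | h2 <;>
    simp only [min_def] <;> split_ifs <;> linarith

/-- Sum over `k ≤ i < n` of `c01(nt - i) - c01((n+1)t - (i+1))` is at most 1. -/
lemma sumDt (n k : ℕ) (hk : k ≤ n) (t : ℝ) (ht : 0 ≤ t) (ht1 : t ≤ 1) :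
    ∑ i ∈ Finset.Ico k n,
      (c01 ((n : ℝ) * t - i) - c01 (((n : ℝ) + 1) * t - (↑(i + 1) : ℝ))) ≤ 1 := by
  have h0 : 0 ≤ (n : ℝ) * t := by positivity
  have h1 : 0 ≤ ((n : ℝ) + 1) * t := by positivity
  rw [Finset.sum_sub_distrib]
  have e1 : ∑ i ∈ Finset.Ico k n, c01 ((n : ℝ) * t - i)
      = min ((n : ℝ) * t) n - min ((n : ℝ) * t) k := by
    rw [Finset.sum_Ico_eq_sub _ hk, sum_c01 _ h0, sum_c01 _ h0]
  have e2 : ∑ i ∈ Finset.Ico k n, c01 (((n : ℝ) + 1) * t - (↑(i + 1) : ℝ))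
      = min (((n : ℝ) + 1) * t) (↑(n + 1) : ℝ) - min (((n : ℝ) + 1) * t) (↑(k + 1) : ℝ) := by
    have := Finset.sum_Ico_add' (fun i : ℕ => c01 (((n : ℝ) + 1) * t - i)) k n 1
    rw [this, Finset.sum_Ico_eq_sub _ (by omega : k + 1 ≤ n + 1), sum_c01 _ h1, sum_c01 _ h1]
  rw [e1, e2]
  push_cast
  have hnn : (n : ℝ) * t ≤ (n : ℝ) := by nlinarith
  have hnn1 : ((n : ℝ) + 1) * t ≤ (n : ℝ) + 1 := by nlinarith
  rw [min_eq_left hnn, min_eq_left hnn1]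
  have hkr : (k : ℝ) ≤ (n : ℝ) := by exact_mod_cast hk
  rcases le_total ((n : ℝ) * t) (k : ℝ) with h | h <;>
    rcases le_total (((n : ℝ) + 1) * t) ((k : ℝ) + 1) with h2 | h2 <;>
    simp only [min_def] <;> split_ifs <;> nlinarith

/-- Per-coordinate positive-part bound, direction `σ` minus `σ'`. -/
lemma sum_max_le (n k : ℕ) (hk : k ≤ n) (a b : ℝ) (ha : 0 ≤ a) (hab : a ≤ b) (hb : b ≤ 1) :
    ∑ i ∈ Finset.range n, max 0 ((c01 ((n : ℝ) * b - i) - c01 ((n : ℝ) * a - i))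
      - (c01 (((n : ℝ) + 1) * b - (↑(ins k i) : ℝ)) - c01 (((n : ℝ) + 1) * a - (↑(ins k i) : ℝ))))
      ≤ 2 := by
  have ha1 : a ≤ 1 := hab.trans hb
  have hb0 : 0 ≤ b := ha.trans hab
  rw [Finset.range_eq_Ico, ← Finset.sum_Ico_consecutive _ (Nat.zero_le k) hk]
  have h1 : ∀ i ∈ Finset.Ico 0 k, max 0 ((c01 ((n : ℝ) * b - i) - c01 ((n : ℝ) * a - i))
      - (c01 (((n : ℝ) + 1) * b - (↑(ins k i) : ℝ)) - c01 (((n : ℝ) + 1) * a - (↑(ins k i) : ℝ))))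
      ≤ c01 (((n : ℝ) + 1) * a - i) - c01 ((n : ℝ) * a - i) := by
    intro i hi
    rw [Finset.mem_Ico] at hi
    have hins : ins k i = i := if_pos hi.2
    rw [hins]
    have hda : c01 ((n : ℝ) * a - i) ≤ c01 (((n : ℝ) + 1) * a - i) :=
      c01_mono (by nlinarith)
    have hdb : c01 ((n : ℝ) * b - i) ≤ c01 (((n : ℝ) + 1) * b - i) :=
      c01_mono (by nlinarith)
    exact max_le (by linarith) (by linarith)
  have h2 : ∀ i ∈ Finset.Ico k n, max 0 ((c01 ((n : ℝ) * b - i) - c01 ((n : ℝ) * a - i))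
      - (c01 (((n : ℝ) + 1) * b - (↑(ins k i) : ℝ)) - c01 (((n : ℝ) + 1) * a - (↑(ins k i) : ℝ))))
      ≤ c01 ((n : ℝ) * b - i) - c01 (((n : ℝ) + 1) * b - (↑(i + 1) : ℝ)) := by
    intro i hi
    rw [Finset.mem_Ico] at hi
    have hins : ins k i = i + 1 := if_neg (by omega)
    rw [hins]
    have hda : c01 (((n : ℝ) + 1) * a - (↑(i + 1) : ℝ)) ≤ c01 ((n : ℝ) * a - i) :=
      c01_mono (by push_cast; nlinarith)
    have hdb : c01 (((n : ℝ) + 1) * b - (↑(i + 1) : ℝ)) ≤ c01 ((n : ℝ) * b - i) :=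
      c01_mono (by push_cast; nlinarith)
    exact max_le (by linarith) (by linarith)
  have b1 := le_trans (Finset.sum_le_sum h1)
    (le_of_eq_of_le (by rw [Nat.Ico_zero_eq_range]) (sumD n k a ha ha1))
  have b2 := le_trans (Finset.sum_le_sum h2) (sumDt n k hk b hb0 hb)
  linarith

/-- Per-coordinate positive-part bound, direction `σ'` minus `σ`. -/
lemma sum_max_le' (n k : ℕ) (hk : k ≤ n) (a b : ℝ) (ha : 0 ≤ a) (hab : a ≤ b) (hb : b ≤ 1) :
    ∑ i ∈ Finset.range n, max 0 ((c01 (((n : ℝ) + 1) * b - (↑(ins k i) : ℝ))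
        - c01 (((n : ℝ) + 1) * a - (↑(ins k i) : ℝ)))
      - (c01 ((n : ℝ) * b - i) - c01 ((n : ℝ) * a - i))) ≤ 2 := by
  have ha1 : a ≤ 1 := hab.trans hb
  have hb0 : 0 ≤ b := ha.trans hab
  rw [Finset.range_eq_Ico, ← Finset.sum_Ico_consecutive _ (Nat.zero_le k) hk]
  have h1 : ∀ i ∈ Finset.Ico 0 k, max 0 ((c01 (((n : ℝ) + 1) * b - (↑(ins k i) : ℝ))
        - c01 (((n : ℝ) + 1) * a - (↑(ins k i) : ℝ)))
      - (c01 ((n : ℝ) * b - i) - c01 ((n : ℝ) * a - i)))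
      ≤ c01 (((n : ℝ) + 1) * b - i) - c01 ((n : ℝ) * b - i) := by
    intro i hi
    rw [Finset.mem_Ico] at hi
    have hins : ins k i = i := if_pos hi.2
    rw [hins]
    have hda : c01 ((n : ℝ) * a - i) ≤ c01 (((n : ℝ) + 1) * a - i) :=
      c01_mono (by nlinarith)
    have hdb : c01 ((n : ℝ) * b - i) ≤ c01 (((n : ℝ) + 1) * b - i) :=
      c01_mono (by nlinarith)
    exact max_le (by linarith) (by linarith)
  have h2 : ∀ i ∈ Finset.Ico k n, max 0 ((c01 (((n : ℝ) + 1) * b - (↑(ins k i) : ℝ))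
        - c01 (((n : ℝ) + 1) * a - (↑(ins k i) : ℝ)))
      - (c01 ((n : ℝ) * b - i) - c01 ((n : ℝ) * a - i)))
      ≤ c01 ((n : ℝ) * a - i) - c01 (((n : ℝ) + 1) * a - (↑(i + 1) : ℝ)) := by
    intro i hi
    rw [Finset.mem_Ico] at hi
    have hins : ins k i = i + 1 := if_neg (by omega)
    rw [hins]
    have hda : c01 (((n : ℝ) + 1) * a - (↑(i + 1) : ℝ)) ≤ c01 ((n : ℝ) * a - i) :=
      c01_mono (by push_cast; nlinarith)
    have hdb : c01 (((n : ℝ) + 1) * b - (↑(i + 1) : ℝ)) ≤ c01 ((n : ℝ) * b - i) :=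
      c01_mono (by push_cast; nlinarith)
    exact max_le (by linarith) (by linarith)
  have b1 := le_trans (Finset.sum_le_sum h1)
    (le_of_eq_of_le (by rw [Nat.Ico_zero_eq_range]) (sumD n k b hb0 hb))
  have b2 := le_trans (Finset.sum_le_sum h2) (sumDt n k hk a ha ha1)
  linarith

lemma min_helper (x y c : ℝ) (hc : 0 < c) : min x (y / c) = min (c * x) y / c := by
  rw [← min_div_div_right hc.le (c * x) y, mul_div_cancel_left₀ _ hc.ne']

lemma max_helper (x y c : ℝ) (hc : 0 < c) : max x (y / c) = max (c * x) y / c := by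
  rw [← max_div_div_right hc.le (c * x) y, mul_div_cancel_left₀ _ hc.ne']

lemma max0_div (z c : ℝ) (hc : 0 < c) : max 0 (z / c) = max 0 z / c := by
  rw [← max_div_div_right hc.le 0 z, zero_div]

lemma ofReal_max0 (x : ℝ) : ENNReal.ofReal x = ENNReal.ofReal (max 0 x) := by
  rcases le_total 0 x with h | h
  · rw [max_eq_right h]
  · rw [max_eq_left h, ENNReal.ofReal_of_nonpos h, ENNReal.ofReal_zero]

lemma vol_inter (a b p q : ℝ) :
    volume (Set.Ioo a b ∩ Set.Icc p q) = ENNReal.ofReal (min b q - max a p) := by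
  apply le_antisymm
  · calc volume (Set.Ioo a b ∩ Set.Icc p q) ≤ volume (Set.Icc (max a p) (min b q)) := by
          apply measure_mono
          rintro x ⟨hx1, hx2⟩
          rw [Set.mem_Ioo] at hx1; rw [Set.mem_Icc] at hx2 ⊢
          exact ⟨max_le hx1.1.le hx2.1, le_min hx1.2.le hx2.2⟩
      _ = ENNReal.ofReal (min b q - max a p) := Real.volume_Icc
  · calc ENNReal.ofReal (min b q - max a p) = volume (Set.Ioo (max a p) (min b q)) :=
          Real.volume_Ioo.symm
      _ ≤ volume (Set.Ioo a b ∩ Set.Icc p q) := by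
          apply measure_mono
          intro x hx
          rw [Set.mem_Ioo] at hx
          constructor
          · rw [Set.mem_Ioo]
            exact ⟨lt_of_le_of_lt (le_max_left _ _) hx.1, lt_of_lt_of_le hx.2 (min_le_left _ _)⟩
          · rw [Set.mem_Icc]
            exact ⟨(le_max_right _ _).trans hx.1.le, hx.2.le.trans (min_le_right _ _)⟩

lemma vol_box (n : ℕ) (hn : 0 < (n : ℝ)) (i : ℕ) (a b : ℝ) (hab : a ≤ b) :
    volume (Set.Ioo a b ∩ Set.Icc ((i : ℝ) / n) (((i : ℝ) + 1) / n))
      = ENNReal.ofReal ((c01 ((n : ℝ) * b - i) - c01 ((n : ℝ) * a - i)) / n) := by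
  rw [vol_inter, ofReal_max0]
  congr 1
  rw [min_helper b ((i : ℝ) + 1) n hn, max_helper a (i : ℝ) n hn, div_sub_div_same,
    max0_div _ _ hn, seg_eq ((n : ℝ) * a) ((n : ℝ) * b) i (by nlinarith)]

lemma permuton_apply (n : ℕ) (hn : 1 ≤ n) (σ : Equiv.Perm (Fin n)) (a b c d : ℝ)
    (hab : a ≤ b) (hcd : c ≤ d) :
    (permutonMeasure n σ (Set.Ioo a b ×ˢ Set.Ioo c d)).toReal
      = (∑ i : Fin n, (c01 ((n : ℝ) * b - i) - c01 ((n : ℝ) * a - i))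
          * (c01 ((n : ℝ) * d - ((σ i : Fin n) : ℕ)) - c01 ((n : ℝ) * c - ((σ i : Fin n) : ℕ))))
        / n := by
  have hn0 : (0 : ℝ) < n := by exact_mod_cast hn
  have hS : MeasurableSet (Set.Ioo a b ×ˢ Set.Ioo c d) :=
    measurableSet_Ioo.prod measurableSet_Ioo
  set X : Fin n → ℝ := fun i => c01 ((n : ℝ) * b - i) - c01 ((n : ℝ) * a - i) with hX
  set Y : Fin n → ℝ := fun i =>
    c01 ((n : ℝ) * d - ((σ i : Fin n) : ℕ)) - c01 ((n : ℝ) * c - ((σ i : Fin n) : ℕ)) with hY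
  have hXnn : ∀ i, 0 ≤ X i := fun i => sub_nonneg.2 (c01_mono (by nlinarith))
  have hYnn : ∀ i, 0 ≤ Y i := fun i => sub_nonneg.2 (c01_mono (by nlinarith))
  have happ : permutonMeasure n σ (Set.Ioo a b ×ˢ Set.Ioo c d)
      = (n : ℝ≥0∞) * ∑ i : Fin n, ENNReal.ofReal ((X i / n) * (Y i / n)) := by
    rw [permutonMeasure, ← Nat.cast_smul_eq_nsmul ℝ≥0∞, Measure.smul_apply,
      Measure.finset_sum_apply, smul_eq_mul]
    congr 1
    refine Finset.sum_congr rfl (fun i _ => ?_)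
    rw [Measure.restrict_apply hS, Set.prod_inter_prod, Measure.volume_eq_prod ℝ ℝ,
      Measure.prod_prod, vol_box n hn0 _ a b hab, vol_box n hn0 _ c d hcd,
      ← ENNReal.ofReal_mul (by have := hXnn i; positivity)]
  rw [happ]
  have hsum : ∑ i : Fin n, ENNReal.ofReal ((X i / n) * (Y i / n))
      = ENNReal.ofReal (∑ i : Fin n, (X i / n) * (Y i / n)) := by
    rw [ENNReal.ofReal_sum_of_nonneg]
    intro i _
    have := hXnn i; have := hYnn i; positivity
  rw [hsum, ← ENNReal.ofReal_natCast n, ← ENNReal.ofReal_mul (by positivity),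
    ENNReal.toReal_ofReal (by
      have : 0 ≤ ∑ i : Fin n, (X i / n) * (Y i / n) := by
        apply Finset.sum_nonneg; intro i _
        have := hXnn i; have := hYnn i; positivity
      positivity)]
  rw [Finset.mul_sum, Finset.sum_div]
  refine Finset.sum_congr rfl (fun i _ => ?_)
  field_simp
  ring

lemma succAbove_val (n : ℕ) (j : Fin (n + 1)) (i : Fin n) :
    ((j.succAbove i : Fin (n + 1)) : ℕ) = ins (j : ℕ) (i : ℕ) := by
  rw [Fin.succAbove, ins]
  split_ifs with h1 h2 h2
  · rfl
  · exact absurd (by exact_mod_cast h1) h2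
  · exact absurd (by exact_mod_cast h2 : i.castSucc < j) h1
  · rfl

lemma perm_succAbove (n : ℕ) (σ : Equiv.Perm (Fin n)) (σ' : Equiv.Perm (Fin (n + 1)))
    (j : Fin (n + 1))
    (h : ∀ s t : Fin n, σ s < σ t ↔ σ' (j.succAbove s) < σ' (j.succAbove t)) (i : Fin n) :
    σ' (j.succAbove i) = (σ' j).succAbove (σ i) := by
  have hg : StrictMono (fun v : Fin n => σ' (j.succAbove (σ.symm v))) := by
    intro u v huv
    exact (h (σ.symm u) (σ.symm v)).mp (by simpa using huv)
  have h2 : StrictMono ((σ' j).succAbove) := Fin.strictMono_succAbove _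
  have hrange : Set.range (fun v : Fin n => σ' (j.succAbove (σ.symm v)))
      = Set.range ((σ' j).succAbove) := by
    rw [Fin.range_succAbove]
    ext w
    simp only [Set.mem_range, Set.mem_compl_iff, Set.mem_singleton_iff]
    constructor
    · rintro ⟨v, rfl⟩
      exact fun hw => Fin.succAbove_ne j _ (σ'.injective hw)
    · intro hw
      have : σ'.symm w ≠ j := fun hc => hw (by rw [← hc, Equiv.apply_symm_apply])
      obtain ⟨u, hu⟩ := Fin.exists_succAbove_eq this
      exact ⟨σ u, by rw [Equiv.symm_apply_apply, hu, Equiv.apply_symm_apply]⟩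
  haveI : WellFoundedLT (Fin n) := inferInstance
  have heq := (StrictMono.range_inj hg h2).1 hrange
  have h3 := congrFun heq (σ i)
  simpa using h3

lemma prod_diff_le (x y x' y' : ℝ) (hx' : 0 ≤ x') (hx'1 : x' ≤ 1) (hy : 0 ≤ y) (hy1 : y ≤ 1) :
    x * y - x' * y' ≤ max 0 (x - x') + max 0 (y - y') := by
  have h1 : (x - x') * y ≤ max 0 (x - x') := by
    calc (x - x') * y ≤ max 0 (x - x') * y := mul_le_mul_of_nonneg_right (le_max_right _ _) hy
      _ ≤ max 0 (x - x') * 1 := mul_le_mul_of_nonneg_left hy1 (le_max_left _ _)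
      _ = _ := mul_one _
  have h2 : x' * (y - y') ≤ max 0 (y - y') := by
    calc x' * (y - y') ≤ x' * max 0 (y - y') := mul_le_mul_of_nonneg_left (le_max_right _ _) hx'
      _ ≤ 1 * max 0 (y - y') := mul_le_mul_of_nonneg_right hx'1 (le_max_left _ _)
      _ = _ := one_mul _
  have hid : x * y - x' * y' = (x - x') * y + x' * (y - y') := by ring
  linarith

end RectDistAux

set_option maxHeartbeats 2000000 in
open RectDistAux Finset in
/-- If `σ'` of size `n+1` is obtained from `σ` of size `n` by inserting one point into its
diagram (i.e. deleting the entry of `σ'` at some position `j` and standardizing yields `σ`,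
which amounts to saying that `σ' ∘ j.succAbove` is in the same relative order as `σ`), then
`d_□(μ_σ, μ_{σ'}) ≤ 6/n`. -/
theorem rectDist_insert_le (n : ℕ) (hn : 1 ≤ n) (σ : Equiv.Perm (Fin n))
    (σ' : Equiv.Perm (Fin (n + 1)))
    (hins : ∃ j : Fin (n + 1), ∀ s t : Fin n,
      σ s < σ t ↔ σ' (j.succAbove s) < σ' (j.succAbove t)) :
    rectDist (permutonMeasure n σ) (permutonMeasure (n + 1) σ') ≤ 6 / (n : ℝ) := by
  obtain ⟨j, hj⟩ := hins
  have hn0 : (0 : ℝ) < n := by exact_mod_cast hn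
  have hn1 : (0 : ℝ) < (n : ℝ) + 1 := by linarith
  have h6 : 0 ≤ 6 / (n : ℝ) := by positivity
  refine Real.sSup_le ?_ h6
  rintro x ⟨a, b, c, d, ha, hb, hc, hd, rfl⟩
  rcases le_or_gt b a with hba | hab
  · rw [Set.Ioo_eq_empty (not_lt.mpr hba), Set.empty_prod]
    simpa using h6
  rcases le_or_gt d c with hdc | hcd
  · rw [Set.Ioo_eq_empty (not_lt.mpr hdc), Set.prod_empty]
    simpa using h6
  have hab' : a ≤ b := hab.le
  have hcd' : c ≤ d := hcd.le
  have hb0 : 0 ≤ b := ha.trans hab'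
  have hd0 : 0 ≤ d := hc.trans hcd'
  have ha1 : a ≤ 1 := hab'.trans hb
  have hc1 : c ≤ 1 := hcd'.trans hd
  -- abbreviations
  set X : Fin n → ℝ := fun i => c01 ((n : ℝ) * b - i) - c01 ((n : ℝ) * a - i) with hX
  set Y : Fin n → ℝ := fun i =>
    c01 ((n : ℝ) * d - ((σ i : Fin n) : ℕ)) - c01 ((n : ℝ) * c - ((σ i : Fin n) : ℕ)) with hY
  set P : Fin n → ℝ := fun i =>
    c01 (((n : ℝ) + 1) * b - (↑(ins (j : ℕ) (i : ℕ)) : ℝ))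
      - c01 (((n : ℝ) + 1) * a - (↑(ins (j : ℕ) (i : ℕ)) : ℝ)) with hP
  set Q : Fin n → ℝ := fun i =>
    c01 (((n : ℝ) + 1) * d - (↑(ins ((σ' j : Fin (n+1)) : ℕ) ((σ i : Fin n) : ℕ)) : ℝ))
      - c01 (((n : ℝ) + 1) * c - (↑(ins ((σ' j : Fin (n+1)) : ℕ) ((σ i : Fin n) : ℕ)) : ℝ))
    with hQ
  -- the two measure evaluations
  have hμ := permuton_apply n hn σ a b c d hab' hcd'
  have hμ' := permuton_apply (n + 1) (by omega) σ' a b c d hab' hcd'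
  have hcast : ((n + 1 : ℕ) : ℝ) = (n : ℝ) + 1 := by push_cast; ring
  rw [hcast] at hμ'
  rw [hμ, hμ']
  -- split off the inserted point
  rw [Fin.sum_univ_succAbove (fun i' : Fin (n + 1) =>
    (c01 (((n : ℝ) + 1) * b - (i' : ℕ)) - c01 (((n : ℝ) + 1) * a - (i' : ℕ)))
      * (c01 (((n : ℝ) + 1) * d - ((σ' i' : Fin (n+1)) : ℕ))
        - c01 (((n : ℝ) + 1) * c - ((σ' i' : Fin (n+1)) : ℕ)))) j]
  have hconv : ∀ i : Fin n,
      (c01 (((n : ℝ) + 1) * b - ((j.succAbove i : Fin (n+1)) : ℕ))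
        - c01 (((n : ℝ) + 1) * a - ((j.succAbove i : Fin (n+1)) : ℕ)))
      * (c01 (((n : ℝ) + 1) * d - ((σ' (j.succAbove i) : Fin (n+1)) : ℕ))
        - c01 (((n : ℝ) + 1) * c - ((σ' (j.succAbove i) : Fin (n+1)) : ℕ)))
      = P i * Q i := by
    intro i
    rw [perm_succAbove n σ σ' j hj i, succAbove_val, succAbove_val, hP, hQ]
  rw [Finset.sum_congr rfl (fun i _ => hconv i)]
  -- basic bounds
  have hX0 : ∀ i, 0 ≤ X i := fun i => sub_nonneg.2 (c01_mono (by nlinarith))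
  have hX1 : ∀ i, X i ≤ 1 := fun i => by
    have := c01_le_one ((n : ℝ) * b - i); have := c01_nonneg ((n : ℝ) * a - i)
    simp only [hX]; linarith
  have hY0 : ∀ i, 0 ≤ Y i := fun i => sub_nonneg.2 (c01_mono (by nlinarith))
  have hY1 : ∀ i, Y i ≤ 1 := fun i => by
    have := c01_le_one ((n : ℝ) * d - ((σ i : Fin n) : ℕ))
    have := c01_nonneg ((n : ℝ) * c - ((σ i : Fin n) : ℕ))
    simp only [hY]; linarith
  have hP0 : ∀ i, 0 ≤ P i := fun i => sub_nonneg.2 (c01_mono (by nlinarith))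
  have hP1 : ∀ i, P i ≤ 1 := fun i => by
    have := c01_le_one (((n : ℝ) + 1) * b - (↑(ins (j : ℕ) (i : ℕ)) : ℝ))
    have := c01_nonneg (((n : ℝ) + 1) * a - (↑(ins (j : ℕ) (i : ℕ)) : ℝ))
    simp only [hP]; linarith
  have hQ0 : ∀ i, 0 ≤ Q i := fun i => sub_nonneg.2 (c01_mono (by nlinarith))
  have hQ1 : ∀ i, Q i ≤ 1 := fun i => by
    have := c01_le_one (((n : ℝ) + 1) * d - (↑(ins ((σ' j : Fin (n+1)) : ℕ) ((σ i : Fin n) : ℕ)) : ℝ))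
    have := c01_nonneg (((n : ℝ) + 1) * c - (↑(ins ((σ' j : Fin (n+1)) : ℕ) ((σ i : Fin n) : ℕ)) : ℝ))
    simp only [hQ]; linarith
  -- positive-part sum bounds
  have hkx : (j : ℕ) ≤ n := Fin.is_le j
  have hky : ((σ' j : Fin (n+1)) : ℕ) ≤ n := Fin.is_le _
  have hXP : ∑ i : Fin n, max 0 (X i - P i) ≤ 2 := by
    have := sum_max_le n (j : ℕ) hkx a b ha hab' hb
    rw [← Fin.sum_univ_eq_sum_range (fun m : ℕ =>
      max 0 ((c01 ((n : ℝ) * b - m) - c01 ((n : ℝ) * a - m))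
        - (c01 (((n : ℝ) + 1) * b - (↑(ins (j : ℕ) m) : ℝ))
          - c01 (((n : ℝ) + 1) * a - (↑(ins (j : ℕ) m) : ℝ))))) n] at this
    exact this
  have hPX : ∑ i : Fin n, max 0 (P i - X i) ≤ 2 := by
    have := sum_max_le' n (j : ℕ) hkx a b ha hab' hb
    rw [← Fin.sum_univ_eq_sum_range (fun m : ℕ =>
      max 0 ((c01 (((n : ℝ) + 1) * b - (↑(ins (j : ℕ) m) : ℝ))
          - c01 (((n : ℝ) + 1) * a - (↑(ins (j : ℕ) m) : ℝ)))
        - (c01 ((n : ℝ) * b - m) - c01 ((n : ℝ) * a - m)))) n] at this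
    exact this
  have hYQ : ∑ i : Fin n, max 0 (Y i - Q i) ≤ 2 := by
    have h0 := sum_max_le n ((σ' j : Fin (n+1)) : ℕ) hky c d hc hcd' hd
    rw [← Fin.sum_univ_eq_sum_range (fun m : ℕ =>
      max 0 ((c01 ((n : ℝ) * d - m) - c01 ((n : ℝ) * c - m))
        - (c01 (((n : ℝ) + 1) * d - (↑(ins ((σ' j : Fin (n+1)) : ℕ) m) : ℝ))
          - c01 (((n : ℝ) + 1) * c - (↑(ins ((σ' j : Fin (n+1)) : ℕ) m) : ℝ))))) n] at h0
    rw [← Equiv.sum_comp σ (fun v : Fin n =>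
      max 0 ((c01 ((n : ℝ) * d - (v : ℕ)) - c01 ((n : ℝ) * c - (v : ℕ)))
        - (c01 (((n : ℝ) + 1) * d - (↑(ins ((σ' j : Fin (n+1)) : ℕ) (v : ℕ)) : ℝ))
          - c01 (((n : ℝ) + 1) * c - (↑(ins ((σ' j : Fin (n+1)) : ℕ) (v : ℕ)) : ℝ))))) ] at h0
    exact h0
  have hQY : ∑ i : Fin n, max 0 (Q i - Y i) ≤ 2 := by
    have h0 := sum_max_le' n ((σ' j : Fin (n+1)) : ℕ) hky c d hc hcd' hd
    rw [← Fin.sum_univ_eq_sum_range (fun m : ℕ =>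
      max 0 ((c01 (((n : ℝ) + 1) * d - (↑(ins ((σ' j : Fin (n+1)) : ℕ) m) : ℝ))
          - c01 (((n : ℝ) + 1) * c - (↑(ins ((σ' j : Fin (n+1)) : ℕ) m) : ℝ)))
        - (c01 ((n : ℝ) * d - m) - c01 ((n : ℝ) * c - m)))) n] at h0
    rw [← Equiv.sum_comp σ (fun v : Fin n =>
      max 0 ((c01 (((n : ℝ) + 1) * d - (↑(ins ((σ' j : Fin (n+1)) : ℕ) (v : ℕ)) : ℝ))
          - c01 (((n : ℝ) + 1) * c - (↑(ins ((σ' j : Fin (n+1)) : ℕ) (v : ℕ)) : ℝ)))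
        - (c01 ((n : ℝ) * d - (v : ℕ)) - c01 ((n : ℝ) * c - (v : ℕ))))) ] at h0
    exact h0
  -- sums and their comparisons
  set S : ℝ := ∑ i : Fin n, X i * Y i with hS
  set T : ℝ := ∑ i : Fin n, P i * Q i with hT
  have hST : S - T ≤ 4 := by
    have h1 : ∀ i ∈ Finset.univ (α := Fin n),
        X i * Y i - P i * Q i ≤ max 0 (X i - P i) + max 0 (Y i - Q i) := fun i _ =>
      prod_diff_le _ _ _ _ (hP0 i) (hP1 i) (hY0 i) (hY1 i)
    have := Finset.sum_le_sum h1
    rw [Finset.sum_sub_distrib, Finset.sum_add_distrib] at this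
    linarith
  have hTS : T - S ≤ 4 := by
    have h1 : ∀ i ∈ Finset.univ (α := Fin n),
        P i * Q i - X i * Y i ≤ max 0 (P i - X i) + max 0 (Q i - Y i) := fun i _ =>
      prod_diff_le _ _ _ _ (hX0 i) (hX1 i) (hQ0 i) (hQ1 i)
    have := Finset.sum_le_sum h1
    rw [Finset.sum_sub_distrib, Finset.sum_add_distrib] at this
    linarith
  have hS0 : 0 ≤ S := Finset.sum_nonneg fun i _ => mul_nonneg (hX0 i) (hY0 i)
  have hT0 : 0 ≤ T := Finset.sum_nonneg fun i _ => mul_nonneg (hP0 i) (hQ0 i)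
  have hTn : T ≤ n := by
    calc T ≤ ∑ _i : Fin n, (1 : ℝ) :=
          Finset.sum_le_sum fun i _ => by
            calc P i * Q i ≤ 1 * 1 := mul_le_mul (hP1 i) (hQ1 i) (hQ0 i) zero_le_one
              _ = 1 := one_mul 1
      _ = n := by simp
  -- the inserted box term
  set t0 : ℝ := (c01 (((n : ℝ) + 1) * b - (j : ℕ)) - c01 (((n : ℝ) + 1) * a - (j : ℕ)))
      * (c01 (((n : ℝ) + 1) * d - ((σ' j : Fin (n+1)) : ℕ))
        - c01 (((n : ℝ) + 1) * c - ((σ' j : Fin (n+1)) : ℕ))) with ht0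
  have ht00 : 0 ≤ t0 := by
    apply mul_nonneg
    · exact sub_nonneg.2 (c01_mono (by nlinarith))
    · exact sub_nonneg.2 (c01_mono (by nlinarith))
  have ht01 : t0 ≤ 1 := by
    have e1 := c01_le_one (((n : ℝ) + 1) * b - (j : ℕ))
    have e2 := c01_nonneg (((n : ℝ) + 1) * a - (j : ℕ))
    have e3 := c01_le_one (((n : ℝ) + 1) * d - ((σ' j : Fin (n+1)) : ℕ))
    have e4 := c01_nonneg (((n : ℝ) + 1) * c - ((σ' j : Fin (n+1)) : ℕ))
    rw [ht0]
    have hb1 : c01 (((n : ℝ) + 1) * b - (j : ℕ)) - c01 (((n : ℝ) + 1) * a - (j : ℕ)) ≤ 1 := by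
      linarith
    have hd1 : c01 (((n : ℝ) + 1) * d - ((σ' j : Fin (n+1)) : ℕ))
        - c01 (((n : ℝ) + 1) * c - ((σ' j : Fin (n+1)) : ℕ)) ≤ 1 := by linarith
    have hb2 : 0 ≤ c01 (((n : ℝ) + 1) * d - ((σ' j : Fin (n+1)) : ℕ))
        - c01 (((n : ℝ) + 1) * c - ((σ' j : Fin (n+1)) : ℕ)) :=
      sub_nonneg.2 (c01_mono (by nlinarith))
    calc _ ≤ 1 * 1 := mul_le_mul hb1 hd1 hb2 zero_le_one
      _ = 1 := one_mul 1
  -- final arithmetic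
  rw [abs_sub_le_iff]
  constructor
  · rw [div_sub_div _ _ hn0.ne' hn1.ne', div_le_div_iff₀ (by positivity) hn0]
    have core1 : S * ((n : ℝ) + 1) - (n : ℝ) * (t0 + T) ≤ 6 * ((n : ℝ) + 1) := by
      nlinarith [mul_le_mul_of_nonneg_right hST hn1.le, mul_nonneg hn0.le ht00]
    nlinarith [mul_le_mul_of_nonneg_right core1 hn0.le]
  · rw [div_sub_div _ _ hn1.ne' hn0.ne', div_le_div_iff₀ (by positivity) hn0]
    have core2 : (t0 + T) * (n : ℝ) - ((n : ℝ) + 1) * S ≤ 6 * ((n : ℝ) + 1) := by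
      nlinarith [mul_le_mul_of_nonneg_right hTS hn0.le, mul_le_mul_of_nonneg_right ht01 hn0.le]
    nlinarith [mul_le_mul_of_nonneg_right core2 hn0.le]
end

section
/- Let I be an interval of ℤ and {Z^{(t)}}_{t∈I} a coalescent-walk process on I: for each t ∈ I, Z^{(t)} is a sequence (Z^{(t)}_s)_{s ≥ t, s ∈ I} of integers with Z^{(t)}_t = 0, and for all t ≤ t′ in I, if Z^{(t)}_k ≥ Z^{(t′)}_k (resp. ≤) for some k ≥ t′ then Z^{(t)}_{k′} ≥ Z^{(t′)}_{k′} (resp. ≤) for all k′ ≥ k. Define a relation ≤_Z on I by: i ≤_Z i for all i; for i < j, i ≤_Z j if Z^{(i)}_j < 0, and j ≤_Z i if Z^{(i)}_j ≥ 0. Then ≤_Z is a total order on I (reflexive, antisymmetric, transitive, and total). -/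
/-- The binary relation `≤_Z` associated with a coalescent-walk process
`Z` (here `Z t s` stands for `Z^{(t)}_s`): `i ≤_Z i`; for `i < j`, `i ≤_Z j` if `Z^{(i)}_j < 0`
and `j ≤_Z i` if `Z^{(i)}_j ≥ 0`. -/
def coalRel (Z : ℤ → ℤ → ℤ) (i j : ℤ) : Prop :=
  i = j ∨ (i < j ∧ Z i j < 0) ∨ (j < i ∧ 0 ≤ Z j i)

/-- Let `I` be an interval of `ℤ` and `{Z^{(t)}}_{t ∈ I}` a coalescent-walk process on `I`:
`Z^{(t)}_t = 0`, and for `t ≤ t'` in `I`, if `Z^{(t)}_k ≥ Z^{(t')}_k` (resp. `≤`) at some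
`k ≥ t'` then the same inequality holds at every later time `k' ≥ k` in `I`.  Then `≤_Z` is a
total order on `I`: reflexive, antisymmetric, transitive and total. -/
theorem coalRel_isTotalOrder (I : Set ℤ)
    (hI : ∀ a b c : ℤ, a ∈ I → c ∈ I → a ≤ b → b ≤ c → b ∈ I)
    (Z : ℤ → ℤ → ℤ)
    (hzero : ∀ t ∈ I, Z t t = 0)
    (hcoal : ∀ t ∈ I, ∀ t' ∈ I, t ≤ t' → ∀ k ∈ I, t' ≤ k → ∀ k' ∈ I, k ≤ k' →
      (Z t k ≤ Z t' k → Z t k' ≤ Z t' k') ∧ (Z t' k ≤ Z t k → Z t' k' ≤ Z t k')) :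
    (∀ i ∈ I, coalRel Z i i) ∧
    (∀ i ∈ I, ∀ j ∈ I, coalRel Z i j → coalRel Z j i → i = j) ∧
    (∀ i ∈ I, ∀ j ∈ I, ∀ k ∈ I, coalRel Z i j → coalRel Z j k → coalRel Z i k) ∧
    (∀ i ∈ I, ∀ j ∈ I, coalRel Z i j ∨ coalRel Z j i) := by
  -- key coupling lemmas
  have key1 : ∀ a ∈ I, ∀ b ∈ I, ∀ c ∈ I, a ≤ b → b ≤ c → 0 ≤ Z a b → Z b c ≤ Z a c := by
    intro a ha b hb c hc hab hbc h
    have := (hcoal a ha b hb hab b hb le_rfl c hc hbc).2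
    rw [hzero b hb] at this
    exact this h
  have key2 : ∀ a ∈ I, ∀ b ∈ I, ∀ c ∈ I, a ≤ b → b ≤ c → Z a b ≤ 0 → Z a c ≤ Z b c := by
    intro a ha b hb c hc hab hbc h
    have := (hcoal a ha b hb hab b hb le_rfl c hc hbc).1
    rw [hzero b hb] at this
    exact this h
  refine ⟨fun i _ => Or.inl rfl, ?_, ?_, ?_⟩
  · rintro i _ j _ (h0 | ⟨h1, h2⟩ | ⟨h1, h2⟩) (h0' | ⟨h3, h4⟩ | ⟨h3, h4⟩) <;> omega
  · rintro i hi j hj k hk (rfl | ⟨h1, h2⟩ | ⟨h1, h2⟩) (rfl | ⟨h3, h4⟩ | ⟨h3, h4⟩)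
    · exact Or.inl rfl
    · exact Or.inr (Or.inl ⟨h3, h4⟩)
    · exact Or.inr (Or.inr ⟨h3, h4⟩)
    · exact Or.inr (Or.inl ⟨h1, h2⟩)
    · -- i < j, Z i j < 0 ; j < k, Z j k < 0
      have hik : i < k := h1.trans h3
      have := key2 i hi j hj k hk h1.le h3.le h2.le
      exact Or.inr (Or.inl ⟨hik, by omega⟩)
    · -- i < j, Z i j < 0 ; k < j, Z k j ≥ 0
      rcases lt_trichotomy i k with h | rfl | h
      · -- i < k < j : need Z i k < 0
        refine Or.inr (Or.inl ⟨h, ?_⟩)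
        by_contra hc
        have := key1 i hi k hk j hj h.le h3.le (by omega)
        omega
      · exact Or.inl rfl
      · -- k < i < j : need 0 ≤ Z k i
        refine Or.inr (Or.inr ⟨h, ?_⟩)
        by_contra hc
        have := key2 k hk i hi j hj h.le h1.le (by omega)
        omega
    · exact Or.inr (Or.inr ⟨h1, h2⟩)
    · -- j < i, 0 ≤ Z j i ; j < k, Z j k < 0
      rcases lt_trichotomy i k with h | rfl | h
      · -- j < i < k : need Z i k < 0
        refine Or.inr (Or.inl ⟨h, ?_⟩)
        have := key1 j hj i hi k hk h1.le h.le h2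
        omega
      · exact Or.inl rfl
      · -- j < k < i : need 0 ≤ Z k i
        refine Or.inr (Or.inr ⟨h, ?_⟩)
        have := key2 j hj k hk i hi h3.le h.le h4.le
        omega
    · -- j < i, 0 ≤ Z j i ; k < j, 0 ≤ Z k j : k < i, need 0 ≤ Z k i
      have hki : k < i := h3.trans h1
      have := key1 k hk j hj i hi h3.le h1.le h4
      exact Or.inr (Or.inr ⟨hki, by omega⟩)
  · intro i _ j _
    rcases lt_trichotomy i j with h | rfl | h
    · rcases lt_or_ge (Z i j) 0 with h2 | h2
      · exact Or.inl (Or.inr (Or.inl ⟨h, h2⟩))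
      · exact Or.inr (Or.inr (Or.inr ⟨h, h2⟩))
    · exact Or.inl (Or.inl rfl)
    · rcases lt_or_ge (Z j i) 0 with h2 | h2
      · exact Or.inr (Or.inr (Or.inl ⟨h, h2⟩))
      · exact Or.inl (Or.inr (Or.inr ⟨h, h2⟩))
end

section
/- Let m = n + k with n ≥ 1, k ≥ 0, fix h ∈ [n] and x, y ∈ [m] with x + y ≤ m + 1. Then the number of permutations σ of size m having exactly n left-to-right minima whose h-th left-to-right minimum (in order of increasing position) is located at position x with value y (i.e., σ(x) = y) equals S(x−1, h−1) · S(y−1, n−h) · C(m−x, m−x−y+1) · C(m−y, m−x−y+1) · (m−x−y+1)!, where S(p, q) denotes the number of permutations of size p with exactly q left-to-right minima (with S(0,0) = 1, S(p,0)=0 for p≥1). -/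
open scoped Classical

/-- The set of left-to-right minima of `σ`: indices `i` with `σ i < σ j` for all `j < i`. -/
def lrMin {m : ℕ} (σ : Equiv.Perm (Fin m)) : Finset (Fin m) :=
  Finset.univ.filter fun i => ∀ j, j < i → σ i < σ j

/-- `S(p, q)`: the number of permutations of size `p` with exactly `q` left-to-right minima
(the unsigned Stirling numbers of the first kind). -/
noncomputable def stirlingLR (p q : ℕ) : ℕ :=
  (Finset.univ.filter (fun σ : Equiv.Perm (Fin p) => (lrMin σ).card = q)).card


/-!
A counted `σ` has its pivot at `(x, y)`: `σ x = y` and every value before position `x` exceeds `y`.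
Let `T` be the set of values before `x` and `S` the set of positions of the values below `y`.
Every other left-to-right minimum lies before `x` or in `S`, and whether a position there is one
depends only on the relative order of `σ` on that block. Hence, for fixed `(T, S)`, `σ` amounts to
four independent bijections from position blocks onto value blocks: the `x` positions before the
pivot onto `T`, with `h - 1` minima (`S(x, h - 1)` ways); the pivot onto `y`; `S` onto the `y`
smallest values, with `n - h` minima (`S(y, n - h)` ways); and the remaining `m - 1 - x - y`
positions onto the remaining values, freely. Finally `T` and `S` can be chosen in
`C(m - 1 - y, x)` and `C(m - 1 - x, y)` ways.
-/

open Finset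

section LRMinima

variable {α α' β γ : Type*} [Fintype α] [LinearOrder α] [LinearOrder β]

def lrMinOf (f : α → β) : Finset α :=
  univ.filter fun i => ∀ j, j < i → f i < f j

lemma mem_lrMinOf {f : α → β} {i : α} : i ∈ lrMinOf f ↔ ∀ j, j < i → f i < f j := by
  simp [lrMinOf]

lemma lrMin_eq_lrMinOf {m : ℕ} (σ : Equiv.Perm (Fin m)) : lrMin σ = lrMinOf σ := by
  ext i; simp [lrMin, mem_lrMinOf]

lemma lrMinOf_comp_strictMono [LinearOrder γ] {g : β → γ} (hg : StrictMono g) (f : α → β) :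
    lrMinOf (g ∘ f) = lrMinOf f := by
  ext i; simp [mem_lrMinOf, hg.lt_iff_lt]

lemma card_lrMinOf_comp_orderIso [Fintype α'] [LinearOrder α'] (f : α → β) (e : α' ≃o α) :
    #(lrMinOf (f ∘ e)) = #(lrMinOf f) := by
  refine card_equiv e.toEquiv fun i => ?_
  simp only [mem_lrMinOf, Function.comp_apply, RelIso.coe_fn_toEquiv]
  exact ⟨fun h j hj => by simpa using h (e.symm j) (e.symm_apply_lt.mpr hj),
    fun h j hj => h (e j) (e.lt_iff_lt.mpr hj)⟩

lemma card_lrMinOf_restrict {p : α → Prop} [DecidablePred p] (f : α → β)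
    (hp : ∀ i j, p i → j < i → f j ≤ f i → p j) :
    #(lrMinOf (f ∘ Subtype.val : {a // p a} → β)) = #((lrMinOf f).filter p) := by
  rw [← card_subtype]
  refine card_equiv (Equiv.refl _) fun i => ?_
  simp only [mem_lrMinOf, Function.comp_apply, Equiv.refl_apply, mem_subtype]
  refine ⟨fun h j hj => ?_, fun h j hj => h j hj⟩
  by_contra hle
  exact hle (h ⟨j, hp i j i.2 hj (not_lt.mp hle)⟩ hj)

lemma card_lrMinOf_subtypeEquiv {p : α → Prop} {q : β → Prop} [DecidablePred p] (f : α → β)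
    (e : {a // p a} ≃ {b // q b}) (he : ∀ a, (e a : β) = f a)
    (hp : ∀ i j, p i → j < i → f j ≤ f i → p j) :
    #(lrMinOf e) = #((lrMinOf f).filter p) := by
  rw [← lrMinOf_comp_strictMono (Subtype.strictMono_coe q), ← card_lrMinOf_restrict f hp,
    show Subtype.val ∘ e = f ∘ Subtype.val from funext he]

lemma card_equiv_card_lrMinOf_eq {β : Type*} [Fintype β] [LinearOrder β] {k : ℕ}
    (hα : Fintype.card α = k) (hβ : Fintype.card β = k) (q : ℕ) :
    Nat.card {e : α ≃ β // #(lrMinOf e) = q} = stirlingLR k q := by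
  let a := Fintype.orderIsoFinOfCardEq α hα
  let b := Fintype.orderIsoFinOfCardEq β hβ
  rw [stirlingLR, ← Fintype.card_subtype, ← Nat.card_eq_fintype_card]
  refine Nat.card_congr (Equiv.subtypeEquiv (a.toEquiv.equivCongr b.toEquiv).symm fun e => ?_)
  rw [lrMin_eq_lrMinOf, ← card_lrMinOf_comp_orderIso e a,
    ← lrMinOf_comp_strictMono b.symm.strictMono]
  rfl

variable {f : α → β} {x : α}

lemma filter_lrMinOf_gt (hx : x ∈ lrMinOf f) :
    (lrMinOf f).filter (x < ·) = (lrMinOf f).filter (f · < f x) := by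
  refine filter_congr fun i hi => ⟨fun hxi => mem_lrMinOf.mp hi x hxi, fun hfi => ?_⟩
  rcases lt_trichotomy x i with hxi | rfl | hix
  · exact hxi
  · exact absurd hfi (lt_irrefl _)
  · exact absurd (mem_lrMinOf.mp hx i hix) (lt_asymm hfi)

lemma card_filter_lrMinOf_le (hx : x ∈ lrMinOf f) :
    #((lrMinOf f).filter (· ≤ x)) = #((lrMinOf f).filter (· < x)) + 1 := by
  have : (lrMinOf f).filter (· ≤ x) = insert x ((lrMinOf f).filter (· < x)) := by
    ext i
    simp only [mem_filter, mem_insert, le_iff_lt_or_eq]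
    constructor
    · rintro ⟨hi, hlt | rfl⟩ <;> simp_all
    · rintro (rfl | ⟨hi, hlt⟩) <;> simp_all
  rw [this, card_insert_of_notMem (by simp)]

lemma card_lrMinOf_eq_of_mem (hx : x ∈ lrMinOf f) :
    #(lrMinOf f) = #((lrMinOf f).filter (· < x)) + 1 + #((lrMinOf f).filter (f · < f x)) := by
  rw [← card_filter_lrMinOf_le hx, ← filter_lrMinOf_gt hx,
    ← card_filter_add_card_filter_not (s := lrMinOf f) (· ≤ x)]
  simp only [not_le]

end LRMinima

section Fiberwise

variable {α β ι : Type*} {f : α → ι} {g : β → ι}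

def fiberPreservingEquivPi :
    {e : α ≃ β // ∀ a, g (e a) = f a} ≃ ∀ c, ({a // f a = c} ≃ {b // g b = c}) where
  toFun e c := e.1.subtypeEquiv fun a => by rw [e.2 a]
  invFun φ := ⟨Equiv.ofFiberEquiv φ, Equiv.ofFiberEquiv_map φ⟩
  left_inv _ := rfl
  right_inv φ := by
    funext c
    ext ⟨a, rfl⟩
    rfl

lemma card_equiv_of_card_eq [Fintype α] [Fintype β] {k : ℕ} (hα : Fintype.card α = k)
    (hβ : Fintype.card β = k) : Nat.card (α ≃ β) = k.factorial := by
  rw [Nat.card_eq_fintype_card, Fintype.card_equiv (Fintype.equivOfCardEq (hα.trans hβ.symm)), hα]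

end Fiberwise

section Blocks

variable {m : ℕ} {x y : Fin m} {T S : Finset (Fin m)}

/-- Labels of position and value blocks: `0` before the pivot, resp. in `T`; `1` the pivot;
`2` in `S`, resp. below `y`; `3` the rest. The permutations with pivot blocks `(T, S)` are
exactly the label-preserving ones (`valBlock_apply_eq_posBlock_iff`). -/
def posBlock (x : Fin m) (S : Finset (Fin m)) (a : Fin m) : Fin 4 :=
  if a < x then 0 else if a = x then 1 else if a ∈ S then 2 else 3

def valBlock (y : Fin m) (T : Finset (Fin m)) (b : Fin m) : Fin 4 :=
  if b ∈ T then 0 else if b = y then 1 else if b < y then 2 else 3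

def blockCard (x y : Fin m) : Fin 4 → ℕ := ![x, 1, y, m - 1 - x - y]

lemma posBlock_eq_zero {a : Fin m} : posBlock x S a = 0 ↔ a < x := by
  unfold posBlock; split_ifs <;> grind

lemma posBlock_eq_one {a : Fin m} : posBlock x S a = 1 ↔ a = x := by
  unfold posBlock; split_ifs <;> grind

lemma posBlock_eq_two (hS : S ⊆ Ioi x) {a : Fin m} : posBlock x S a = 2 ↔ a ∈ S := by
  have := @hS a
  unfold posBlock; split_ifs <;> grind

lemma posBlock_eq_three (hS : S ⊆ Ioi x) {a : Fin m} : posBlock x S a = 3 ↔ a ∈ Ioi x \ S := by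
  have := @hS a
  unfold posBlock; split_ifs <;> grind

lemma valBlock_eq_zero {b : Fin m} : valBlock y T b = 0 ↔ b ∈ T := by
  unfold valBlock; split_ifs <;> grind

lemma valBlock_eq_one (hT : T ⊆ Ioi y) {b : Fin m} : valBlock y T b = 1 ↔ b = y := by
  have := @hT b
  unfold valBlock; split_ifs <;> grind

lemma valBlock_eq_two (hT : T ⊆ Ioi y) {b : Fin m} : valBlock y T b = 2 ↔ b < y := by
  have := @hT b
  unfold valBlock; split_ifs <;> grind

lemma valBlock_eq_three (hT : T ⊆ Ioi y) {b : Fin m} : valBlock y T b = 3 ↔ b ∈ Ioi y \ T := by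
  have := @hT b
  unfold valBlock; split_ifs <;> grind

lemma card_posBlock_fiber (hS : S ⊆ Ioi x) (hSc : #S = y) (c : Fin 4) :
    Fintype.card {a // posBlock x S a = c} = blockCard x y c := by
  fin_cases c
  · simp [Fintype.card_of_subtype (p := (posBlock x S · = 0)) (Iio x) fun a => by
      rw [mem_Iio, posBlock_eq_zero], blockCard]
  · simp [Fintype.card_of_subtype (p := (posBlock x S · = 1)) {x} fun a => by
      rw [mem_singleton, posBlock_eq_one], blockCard]
  · simp [Fintype.card_of_subtype S fun a => (posBlock_eq_two hS).symm, hSc, blockCard]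
  · simp [Fintype.card_of_subtype _ fun a => (posBlock_eq_three hS).symm,
      card_sdiff_of_subset hS, hSc, blockCard]

lemma card_valBlock_fiber (hT : T ⊆ Ioi y) (hTc : #T = x) (c : Fin 4) :
    Fintype.card {b // valBlock y T b = c} = blockCard x y c := by
  fin_cases c
  · simp [Fintype.card_of_subtype T fun b => valBlock_eq_zero.symm, hTc, blockCard]
  · simp [Fintype.card_of_subtype (p := (valBlock y T · = 1)) {y} fun b => by
      rw [mem_singleton, valBlock_eq_one hT], blockCard]
  · simp [Fintype.card_of_subtype (p := (valBlock y T · = 2)) (Iio y) fun b => by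
      rw [mem_Iio, valBlock_eq_two hT], blockCard]
  · simp [Fintype.card_of_subtype _ fun b => (valBlock_eq_three hT).symm,
      card_sdiff_of_subset hT, hTc, blockCard]
    omega

lemma card_blockwise_lrMinOf (hS : S ⊆ Ioi x) (hSc : #S = y) (hT : T ⊆ Ioi y)
    (hTc : #T = x) (q r : ℕ) :
    Nat.card {φ : ∀ c, {a // posBlock x S a = c} ≃ {b // valBlock y T b = c} //
        #(lrMinOf (φ 0)) = q ∧ #(lrMinOf (φ 2)) = r} =
      stirlingLR x q * stirlingLR y r * (m - 1 - x - y).factorial := by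
  let R (c : Fin 4) (e : {a // posBlock x S a = c} ≃ {b // valBlock y T b = c}) : Prop :=
    (c = 0 → #(lrMinOf e) = q) ∧ (c = 2 → #(lrMinOf e) = r)
  have hR : ∀ φ : ∀ c, {a // posBlock x S a = c} ≃ {b // valBlock y T b = c},
      (#(lrMinOf (φ 0)) = q ∧ #(lrMinOf (φ 2)) = r) ↔ ∀ c, R c (φ c) := fun φ =>
    ⟨fun h c => ⟨fun hc => hc ▸ h.1, fun hc => hc ▸ h.2⟩, fun h => ⟨(h 0).1 rfl, (h 2).2 rfl⟩⟩
  have hP := card_posBlock_fiber hS hSc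
  have hV := card_valBlock_fiber hT hTc
  rw [Nat.card_congr ((Equiv.subtypeEquivRight hR).trans Equiv.subtypePiEquivPi),
    Nat.card_pi, Fin.prod_univ_four]
  simp only [R, Fin.reduceEq, forall_const, and_true, true_and, false_implies,
    Nat.card_subtype_true, card_equiv_card_lrMinOf_eq (hP 0) (hV 0),
    card_equiv_card_lrMinOf_eq (hP 2) (hV 2), card_equiv_of_card_eq (hP 1) (hV 1),
    card_equiv_of_card_eq (hP 3) (hV 3)]
  simp [blockCard]

end Blocks

section PivotDecomposition

variable {m n h : ℕ} {x y : Fin m} {T S : Finset (Fin m)} {σ : Equiv.Perm (Fin m)}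

def IsHthLRMinAt (n h : ℕ) (x y : Fin m) (σ : Equiv.Perm (Fin m)) : Prop :=
  #(lrMin σ) = n ∧ x ∈ lrMin σ ∧ σ x = y ∧ #((lrMin σ).filter (· ≤ x)) = h

lemma isHthLRMinAt_iff (hh1 : 1 ≤ h) (hhn : h ≤ n) (hx : x ∈ lrMin σ) (hy : σ x = y) :
    IsHthLRMinAt n h x y σ ↔
      #((lrMin σ).filter (· < x)) = h - 1 ∧ #((lrMin σ).filter (σ · < y)) = n - h := by
  rw [lrMin_eq_lrMinOf] at hx
  rw [IsHthLRMinAt, lrMin_eq_lrMinOf, card_lrMinOf_eq_of_mem hx, card_filter_lrMinOf_le hx, hy]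
  simp only [hx, true_and]
  omega

def pivotBlocks (x y : Fin m) (σ : Equiv.Perm (Fin m)) : Finset (Fin m) × Finset (Fin m) :=
  ((Iio x).map σ.toEmbedding, (Iio y).map σ.symm.toEmbedding)

lemma pivotBlocks_eq_iff :
    pivotBlocks x y σ = (T, S) ↔ (∀ a, σ a ∈ T ↔ a < x) ∧ (∀ a, σ a < y ↔ a ∈ S) := by
  simp only [pivotBlocks, Prod.mk.injEq, Finset.ext_iff, mem_map_equiv, mem_Iio,
    Equiv.symm_symm]
  rw [← σ.forall_congr_right]
  simp only [Equiv.symm_apply_apply]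
  exact and_congr (forall_congr' fun a => Iff.comm) Iff.rfl

lemma pivotBlocks_mem (hx : x ∈ lrMin σ) (hy : σ x = y) :
    pivotBlocks x y σ ∈ powersetCard x (Ioi y) ×ˢ powersetCard y (Ioi x) := by
  rw [lrMin_eq_lrMinOf, mem_lrMinOf] at hx
  simp only [pivotBlocks, mem_product, mem_powersetCard, card_map, Fin.card_Iio, and_true]
  refine ⟨fun b hb => ?_, fun a ha => ?_⟩
  · rw [mem_map_equiv, mem_Iio] at hb
    simpa [← hy] using hx _ hb
  · rw [mem_map_equiv, mem_Iio, Equiv.symm_symm] at ha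
    rw [mem_Ioi]
    by_contra hax
    rcases (not_lt.mp hax).lt_or_eq with hax | rfl
    · exact lt_asymm ha (hy ▸ hx a hax)
    · exact lt_irrefl _ (hy ▸ ha)

lemma valBlock_apply_eq_posBlock_iff (hT : T ⊆ Ioi y) (hS : S ⊆ Ioi x) :
    (∀ a, valBlock y T (σ a) = posBlock x S a) ↔
      σ x = y ∧ (∀ a, σ a ∈ T ↔ a < x) ∧ (∀ a, σ a < y ↔ a ∈ S) := by
  refine ⟨fun h => ⟨?_, fun a => ?_, fun a => ?_⟩, fun ⟨hx, hT', hS'⟩ a => ?_⟩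
  · rw [← valBlock_eq_one hT, h, posBlock_eq_one]
  · rw [← valBlock_eq_zero, h, posBlock_eq_zero]
  · rw [← valBlock_eq_two hT, h, posBlock_eq_two hS]
  · have hy : σ a = y ↔ a = x := by rw [← hx, σ.apply_eq_iff_eq]
    simp only [valBlock, posBlock, hT', hy]
    split_ifs <;> simp_all

lemma card_lrMinOf_block_zero (hc : ∀ a, valBlock y T (σ a) = posBlock x S a) :
    #(lrMinOf (fiberPreservingEquivPi ⟨σ, hc⟩ 0)) = #((lrMin σ).filter (· < x)) := by
  rw [card_lrMinOf_subtypeEquiv σ _ (fun _ => rfl), lrMin_eq_lrMinOf]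
  · exact congrArg card (filter_congr fun a _ => posBlock_eq_zero)
  · intro i j hi hji _
    rw [posBlock_eq_zero] at hi ⊢
    exact hji.trans hi

lemma card_lrMinOf_block_two (hT : T ⊆ Ioi y) (hS : S ⊆ Ioi x)
    (hc : ∀ a, valBlock y T (σ a) = posBlock x S a) :
    #(lrMinOf (fiberPreservingEquivPi ⟨σ, hc⟩ 2)) = #((lrMin σ).filter (σ · < y)) := by
  have hS' := ((valBlock_apply_eq_posBlock_iff hT hS).mp hc).2.2
  rw [card_lrMinOf_subtypeEquiv σ _ (fun _ => rfl), lrMin_eq_lrMinOf]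
  · exact congrArg card (filter_congr fun a _ => by rw [posBlock_eq_two hS, hS'])
  · intro i j hi _ hji
    rw [posBlock_eq_two hS, ← hS'] at hi ⊢
    exact hji.trans_lt hi

lemma isHthLRMinAt_and_pivotBlocks_eq_iff (hh1 : 1 ≤ h) (hhn : h ≤ n) (hT : T ⊆ Ioi y)
    (hS : S ⊆ Ioi x) :
    IsHthLRMinAt n h x y σ ∧ pivotBlocks x y σ = (T, S) ↔
      ∃ hc : ∀ a, valBlock y T (σ a) = posBlock x S a,
        #(lrMinOf (fiberPreservingEquivPi ⟨σ, hc⟩ 0)) = h - 1 ∧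
        #(lrMinOf (fiberPreservingEquivPi ⟨σ, hc⟩ 2)) = n - h := by
  rw [pivotBlocks_eq_iff]
  constructor
  · rintro ⟨hσ, h0, h2⟩
    have hc := (valBlock_apply_eq_posBlock_iff hT hS).mpr ⟨hσ.2.2.1, h0, h2⟩
    refine ⟨hc, ?_⟩
    rw [card_lrMinOf_block_zero, card_lrMinOf_block_two hT hS]
    exact (isHthLRMinAt_iff hh1 hhn hσ.2.1 hσ.2.2.1).mp hσ
  · rintro ⟨hc, hcard⟩
    obtain ⟨hy, h0, h2⟩ := (valBlock_apply_eq_posBlock_iff hT hS).mp hc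
    have hx : x ∈ lrMin σ := by
      rw [lrMin_eq_lrMinOf, mem_lrMinOf, hy]
      exact fun j hj => mem_Ioi.mp (hT ((h0 j).mpr hj))
    rw [card_lrMinOf_block_zero, card_lrMinOf_block_two hT hS] at hcard
    exact ⟨(isHthLRMinAt_iff hh1 hhn hx hy).mpr hcard, h0, h2⟩

lemma card_isHthLRMinAt_pivotBlocks_eq (hh1 : 1 ≤ h) (hhn : h ≤ n)
    (hT : T ∈ powersetCard x (Ioi y)) (hS : S ∈ powersetCard y (Ioi x)) :
    Nat.card {σ // IsHthLRMinAt n h x y σ ∧ pivotBlocks x y σ = (T, S)} =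
      stirlingLR x (h - 1) * stirlingLR y (n - h) * (m - 1 - x - y).factorial := by
  rw [mem_powersetCard] at hT hS
  let P (φ : ∀ c, {a // posBlock x S a = c} ≃ {b // valBlock y T b = c}) : Prop :=
    #(lrMinOf (φ 0)) = h - 1 ∧ #(lrMinOf (φ 2)) = n - h
  refine (Nat.card_congr ?_).trans (card_blockwise_lrMinOf hS.1 hS.2 hT.1 hT.2 _ _)
  exact (Equiv.subtypeEquivRight fun σ =>
      isHthLRMinAt_and_pivotBlocks_eq_iff hh1 hhn hT.1 hS.1).trans
    ((Equiv.subtypeSubtypeEquivSubtypeExists _ fun e => P (fiberPreservingEquivPi e)).symm.trans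
      (fiberPreservingEquivPi.subtypeEquiv fun _ => Iff.rfl))

lemma card_isHthLRMinAt (hh1 : 1 ≤ h) (hhn : h ≤ n) (hxy : (x : ℕ) + y + 1 ≤ m) :
    Nat.card {σ // IsHthLRMinAt n h x y σ} =
      stirlingLR x (h - 1) * stirlingLR y (n - h) * (m - 1 - x).choose (m - 1 - x - y) *
        (m - 1 - y).choose (m - 1 - x - y) * (m - 1 - x - y).factorial := by
  have hfiber : ∀ TS ∈ powersetCard x (Ioi y) ×ˢ powersetCard y (Ioi x),
      #((univ.filter (IsHthLRMinAt n h x y)).filter (pivotBlocks x y · = TS)) =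
        stirlingLR x (h - 1) * stirlingLR y (n - h) * (m - 1 - x - y).factorial := by
    intro TS hTS
    rw [filter_filter, ← Fintype.card_subtype, ← Nat.card_eq_fintype_card]
    exact card_isHthLRMinAt_pivotBlocks_eq hh1 hhn (mem_product.mp hTS).1 (mem_product.mp hTS).2
  rw [Nat.card_eq_fintype_card, Fintype.card_subtype,
    card_eq_sum_card_fiberwise fun σ hσ => pivotBlocks_mem (mem_filter.mp hσ).2.2.1
      (mem_filter.mp hσ).2.2.2.1,
    sum_congr rfl hfiber, sum_const, card_product, card_powersetCard, card_powersetCard,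
    Fin.card_Ioi, Fin.card_Ioi, ← Nat.choose_symm (by omega : (x : ℕ) ≤ m - 1 - y),
    ← Nat.choose_symm (by omega : (y : ℕ) ≤ m - 1 - x),
    show m - 1 - y - x = m - 1 - x - y by omega, smul_eq_mul]
  ring

end PivotDecomposition

-- Positions and values are 0-indexed: `x` and `y` are `x - 1` and `y - 1` of the informal statement.
theorem card_hth_lr_min_at_general (m n h : ℕ) (hh1 : 1 ≤ h) (hhn : h ≤ n) (x y : Fin m)
    (hxy : (x : ℕ) + (y : ℕ) + 1 ≤ m) :
    (Finset.univ.filter (fun σ : Equiv.Perm (Fin m) =>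
        (lrMin σ).card = n ∧ x ∈ lrMin σ ∧ σ x = y ∧
        ((lrMin σ).filter (fun i => i ≤ x)).card = h)).card
      = stirlingLR (x : ℕ) (h - 1) * stirlingLR (y : ℕ) (n - h) *
        Nat.choose (m - 1 - (x : ℕ)) (m - 1 - (x : ℕ) - (y : ℕ)) *
        Nat.choose (m - 1 - (y : ℕ)) (m - 1 - (x : ℕ) - (y : ℕ)) *
        Nat.factorial (m - 1 - (x : ℕ) - (y : ℕ)) := by
  rw [← Fintype.card_subtype, ← Nat.card_eq_fintype_card]
  exact card_isHthLRMinAt hh1 hhn hxy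

/-- Let `m = n + k` with `n ≥ 1`, `k ≥ 0`, fix `h ∈ [n]` and (0-indexed) position `x` and
value `y` with `x + y + 1 ≤ m` (the 0-indexed form of the 1-indexed condition
`x + y ≤ m + 1`).  The number of permutations `σ` of size `m` with exactly `n` left-to-right
minima whose `h`-th left-to-right minimum is at position `x` with value `y` equals
`S(x, h−1) · S(y, n−h) · C(m−1−x, m−1−x−y) · C(m−1−y, m−1−x−y) · (m−1−x−y)!`
(the 0-indexed form of
`S(x−1, h−1) · S(y−1, n−h) · C(m−x, m−x−y+1) · C(m−y, m−x−y+1) · (m−x−y+1)!`). -/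
theorem card_hth_lr_min_at (m n k h : ℕ) (hm : m = n + k) (hn : 1 ≤ n)
    (hh1 : 1 ≤ h) (hhn : h ≤ n) (x y : Fin m) (hxy : (x : ℕ) + (y : ℕ) + 1 ≤ m) :
    (Finset.univ.filter (fun σ : Equiv.Perm (Fin m) =>
        (lrMin σ).card = n ∧ x ∈ lrMin σ ∧ σ x = y ∧
        ((lrMin σ).filter (fun i => i ≤ x)).card = h)).card
      = stirlingLR (x : ℕ) (h - 1) * stirlingLR (y : ℕ) (n - h) *
        Nat.choose (m - 1 - (x : ℕ)) (m - 1 - (x : ℕ) - (y : ℕ)) *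
        Nat.choose (m - 1 - (y : ℕ)) (m - 1 - (x : ℕ) - (y : ℕ)) *
        Nat.factorial (m - 1 - (x : ℕ) - (y : ℕ)) :=
  card_hth_lr_min_at_general m n h hh1 hhn x y hxy
end
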